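/- arXiv:1003.1035 — 5 statements merged into one kernel-verified Lean document; each statement's English description precedes it below -/
import Mathlib

section
/- Let (X,d) be a metric space, p ∈ [1,∞), s > 0 and C > 0. Let μ be a compactly supported Borel probability measure on X such that for every x ∈ supp μ and every r ≤ diam(supp μ) one has μ(B(x,r)) ≥ C⁻¹ rˢ. Then for every positive integer N, W_p(μ, Δ_N) ≤ 5 C^{1/s} / N^{1/s}. -/
open MeasureTheory Metric Filter
open scoped ENNReal

noncomputable section

/-- A transport plan (coupling) between two measures. -/
def IsCoupling {X : Type*} [MeasurableSpace X] (μ ν : Measure X) (π : Measure (X × X)) : Prop :=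
  π.map Prod.fst = μ ∧ π.map Prod.snd = ν

/-- The `L^p` Wasserstein distance between two measures of equal mass. -/
def Wp {X : Type*} [PseudoMetricSpace X] [MeasurableSpace X] (p : ℝ) (μ ν : Measure X) : ℝ≥0∞ :=
  ⨅ (π : Measure (X × X)) (_ : IsCoupling μ ν π),
    (∫⁻ z, edist z.1 z.2 ^ p ∂π) ^ (1 / p)

/-- A measure is supported on at most `N` points. -/
def FinSupported {X : Type*} [MeasurableSpace X] (N : ℕ) (ν : Measure X) : Prop :=
  ∃ S : Finset X, S.card ≤ N ∧ ν ((S : Set X))ᶜ = 0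

/-- The `L^p` Wasserstein distance from `μ` to the set `Δ_N` of measures supported
on at most `N` points and having the same total mass as `μ`. -/
def WpDelta {X : Type*} [PseudoMetricSpace X] [MeasurableSpace X]
    (p : ℝ) (μ : Measure X) (N : ℕ) : ℝ≥0∞ :=
  ⨅ (ν : Measure X) (_ : FinSupported N ν ∧ ν Set.univ = μ Set.univ), Wp p μ ν

/-- The (topological) support of a measure: points all of whose open neighborhoods
have positive measure. -/
def measSupport {X : Type*} [TopologicalSpace X] [MeasurableSpace X] (μ : Measure X) : Set X :=
  {x | ∀ U : Set X, IsOpen U → x ∈ U → 0 < μ U}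

/-!
Put `t = (C / N) ^ (1 / s)`, so that lower regularity gives every ball `B(x, t)` centred in the
support mass at least `1 / N`. These balls are disjoint around the points of a `2t`-separated
subset of the support, so such a subset has at most `N` points, and a maximal one is a `2t`-net
of the support with at most `N` points (when `t > diam (supp μ)`, any single point is one).
As `μ` lives on a compact set its support is conull, so the nearest-point projection onto the
net moves `μ`-almost every point by at most `2t`; the push-forward of `μ` under it is an
`N`-point measure at `W_p`-distance at most `2t ≤ 5t` from `μ`.
-/

open Set
open scoped NNReal

lemma measSupport_eq_support {X : Type*} [TopologicalSpace X] [MeasurableSpace X]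
    (μ : Measure X) : measSupport μ = μ.support := by
  rw [Measure.support_eq_forall_isOpen]
  ext x
  exact ⟨fun h U hx hU => h U hU hx, fun h U hU hx => h U hx hU⟩

lemma MeasureTheory.Measure.support_mem_ae_of_isCompact {X : Type*} [TopologicalSpace X]
    [TopologicalSpace.PseudoMetrizableSpace X] [MeasurableSpace X] {μ : Measure X} {K : Set X}
    (hK : IsCompact K) (hKμ : K ∈ ae μ) : μ.support ∈ ae μ := by
  by_contra h
  obtain ⟨F, hFsupp, hF, hFpos⟩ := InnerRegularWRT.of_pseudoMetrizableSpace μ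
    isOpen_compl_support 0 (pos_iff_ne_zero.2 h)
  have hFK : μ (F ∩ K) = 0 := measure_eq_zero_of_isCompact_subset_compl_support
    (hK.inter_left hF) (inter_subset_left.trans hFsupp)
  refine hFpos.ne' (measure_mono_null (fun x hx => ?_) (measure_union_null hFK hKμ))
  by_cases hxK : x ∈ K
  exacts [Or.inl ⟨hx, hxK⟩, Or.inr hxK]

namespace Metric

variable {X : Type*} [PseudoMetricSpace X] [MeasurableSpace X] [OpensMeasurableSpace X]
  {μ : Measure X} {r : ℝ≥0} {δ : ℝ≥0∞} {N : ℕ}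

lemma IsSeparated.card_mul_le_measure_univ {F : Finset X}
    (hF : IsSeparated (2 * r : ℝ≥0) (F : Set X)) (hδ : ∀ x ∈ F, δ ≤ μ (closedBall x r)) :
    F.card * δ ≤ μ univ := by
  have hdisj : (F : Set X).PairwiseDisjoint fun x => closedBall x r := by
    intro x hx y hy hxy
    refine closedBall_disjoint_closedBall ?_
    have hsep : ((2 * r : ℝ≥0) : ℝ≥0∞) < edist x y := hF hx hy hxy
    rw [edist_dist, ← ENNReal.ofReal_coe_nnreal,
      ENNReal.ofReal_lt_ofReal_iff_of_nonneg (by positivity)] at hsep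
    push_cast at hsep
    linarith
  calc F.card * δ = ∑ _x ∈ F, δ := by rw [Finset.sum_const, nsmul_eq_mul]
    _ ≤ ∑ x ∈ F, μ (closedBall x r) := Finset.sum_le_sum hδ
    _ = μ (⋃ x ∈ F, closedBall x r) :=
        (measure_biUnion_finset hdisj fun _ _ => measurableSet_closedBall).symm
    _ ≤ μ univ := measure_mono (subset_univ _)

lemma packingNumber_le_of_le_measure_closedBall {A : Set X}
    (hδ : ∀ x ∈ A, δ ≤ μ (closedBall x r)) (hδ0 : δ ≠ 0) (hδtop : δ ≠ ⊤)
    (hμ : μ univ ≤ N * δ) : packingNumber (2 * r) A ≤ N := by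
  refine iSup₂_le fun C hCA => iSup_le fun hC => ?_
  by_contra! hlt
  obtain ⟨D, hDC, hD⟩ := exists_subset_encard_eq (Order.add_one_le_of_lt hlt)
  have hDfin : D.Finite := finite_of_encard_eq_coe (k := N + 1) (by exact_mod_cast hD)
  have hcard : hDfin.toFinset.card = N + 1 := by
    rw [← Nat.cast_inj (R := ℕ∞), ← hDfin.encard_eq_coe_toFinset_card, hD]
    push_cast; rfl
  have hpack := IsSeparated.card_mul_le_measure_univ (μ := μ) (F := hDfin.toFinset)
    (by simpa using hC.subset hDC) fun x hx => hδ x (hCA (hDC (by simpa using hx)))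
  rw [hcard] at hpack
  have hle := hpack.trans hμ
  rw [ENNReal.mul_le_mul_iff_left hδ0 hδtop] at hle
  norm_cast at hle
  omega

lemma exists_isCover_encard_le_of_le_measure_closedBall {A : Set X}
    (hA : Bornology.IsBounded A) (hδ : (r : ℝ) ≤ diam A → ∀ x ∈ A, δ ≤ μ (closedBall x r))
    (hδ0 : δ ≠ 0) (hδtop : δ ≠ ⊤) (hμ : μ univ ≤ N * δ) (hN : 0 < N) :
    ∃ S ⊆ A, S.encard ≤ N ∧ IsCover (2 * r) A S := by
  by_cases hdiam : (r : ℝ) ≤ diam A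
  · have hpack := packingNumber_le_of_le_measure_closedBall (hδ hdiam) hδ0 hδtop hμ
    have hfin : packingNumber (2 * r) A ≠ ⊤ := ne_top_of_le_ne_top (by simp) hpack
    exact ⟨maximalSeparatedSet _ A, maximalSeparatedSet_subset,
      (encard_maximalSeparatedSet hfin).trans_le hpack, isCover_maximalSeparatedSet hfin⟩
  obtain rfl | ⟨x, hx⟩ := A.eq_empty_or_nonempty
  · exact ⟨∅, le_rfl, by simp, IsCover.empty⟩
  refine ⟨{x}, singleton_subset_iff.2 hx, by rw [encard_singleton]; exact_mod_cast hN,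
    IsCover.singleton_of_ediam_le ?_ hx⟩
  refine (ediam_le_of_forall_dist_le fun y hy z hz => dist_le_diam_of_mem hA hy hz).trans ?_
  rw [← ENNReal.ofReal_coe_nnreal]
  refine ENNReal.ofReal_le_ofReal ?_
  push_cast
  linarith [r.coe_nonneg]

end Metric

lemma Set.Finite.exists_measurable_nearest {X : Type*} [PseudoEMetricSpace X] [MeasurableSpace X]
    [OpensMeasurableSpace X] {S : Set X} (hS : S.Finite) (hne : S.Nonempty) :
    ∃ T : X → X, Measurable T ∧ (∀ x, T x ∈ S) ∧ ∀ x, ∀ c ∈ S, edist x (T x) ≤ edist x c := by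
  obtain ⟨x₀, hx₀⟩ := hne
  set l := hS.toFinset.toList
  set e : ℕ → X := fun k => l.getD k x₀
  have he : ∀ k, e k ∈ S := by
    intro k
    show l.getD k x₀ ∈ S
    by_cases hk : k < l.length
    · rw [List.getD_eq_getElem _ _ hk]
      exact hS.mem_toFinset.1 (Finset.mem_toList.1 (List.getElem_mem hk))
    · rwa [List.getD_eq_default _ _ (not_lt.1 hk)]
  refine ⟨SimpleFunc.nearestPt e (l.length - 1), SimpleFunc.measurable _, fun x => he _,
    fun x c hc => ?_⟩
  obtain ⟨k, hk, rfl⟩ := List.getElem_of_mem (Finset.mem_toList.2 (hS.mem_toFinset.2 hc))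
  have hek : e k = l[k] := List.getD_eq_getElem _ _ hk
  rw [edist_comm x, edist_comm x, ← hek]
  exact SimpleFunc.edist_nearestPt_le e x (Nat.le_sub_one_of_lt hk)

lemma Wp_map_le {X : Type*} [PseudoMetricSpace X] [MeasurableSpace X] {μ : Measure X}
    {T : X → X} (hT : Measurable T) {p : ℝ} (hp : 0 < p) {r : ℝ≥0∞}
    (h : ∀ᵐ x ∂μ, edist x (T x) ≤ r) : Wp p μ (μ.map T) ≤ r * μ univ ^ (1 / p) := by
  have hgraph : Measurable fun x => (x, T x) := measurable_id.prodMk hT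
  have hcpl : IsCoupling μ (μ.map T) (μ.map fun x => (x, T x)) :=
    ⟨by rw [Measure.map_map measurable_fst hgraph]; exact Measure.map_id,
      by rw [Measure.map_map measurable_snd hgraph]; rfl⟩
  calc Wp p μ (μ.map T)
      ≤ (∫⁻ z, edist z.1 z.2 ^ p ∂μ.map fun x => (x, T x)) ^ (1 / p) := iInf₂_le _ hcpl
    _ ≤ (∫⁻ x, edist x (T x) ^ p ∂μ) ^ (1 / p) := by
        gcongr
        exact lintegral_map_le _ _
    _ ≤ (∫⁻ _, r ^ p ∂μ) ^ (1 / p) := by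
        gcongr ?_ ^ _
        exact lintegral_mono_ae (h.mono fun x hx => ENNReal.rpow_le_rpow hx hp.le)
    _ = r * μ univ ^ (1 / p) := by
        rw [lintegral_const, ENNReal.mul_rpow_of_nonneg _ _ (by positivity), ← ENNReal.rpow_mul,
          mul_one_div_cancel hp.ne', ENNReal.rpow_one]

lemma WpDelta_le_of_ae_exists_edist_le {X : Type*} [MetricSpace X] [MeasurableSpace X]
    [OpensMeasurableSpace X] {μ : Measure X} {p : ℝ} (hp : 0 < p) {N : ℕ} {S : Set X}
    (hS : S.Finite) (hSN : S.encard ≤ N) (hne : S.Nonempty) {r : ℝ≥0∞}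
    (h : ∀ᵐ x ∂μ, ∃ c ∈ S, edist x c ≤ r) : WpDelta p μ N ≤ r * μ univ ^ (1 / p) := by
  obtain ⟨T, hT, hTS, hTnear⟩ := hS.exists_measurable_nearest hne
  have hfin : FinSupported N (μ.map T) := by
    refine ⟨hS.toFinset, ?_, ?_⟩
    · rwa [hS.encard_eq_coe_toFinset_card, Nat.cast_le] at hSN
    · rw [hS.coe_toFinset, Measure.map_apply hT hS.measurableSet.compl, preimage_compl,
        eq_univ_of_forall (s := T ⁻¹' S) hTS, compl_univ, measure_empty]
  have hmass : μ.map T univ = μ univ := by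
    rw [Measure.map_apply hT MeasurableSet.univ, preimage_univ]
  calc WpDelta p μ N ≤ Wp p μ (μ.map T) := iInf₂_le _ ⟨hfin, hmass⟩
    _ ≤ r * μ univ ^ (1 / p) :=
        Wp_map_le hT hp (h.mono fun x ⟨c, hc, hxc⟩ => (hTnear x c hc).trans hxc)

theorem wasserstein_le_of_lower_regular
    {X : Type*} [MetricSpace X] [MeasurableSpace X] [BorelSpace X]
    (p : ℝ) (hp : 1 ≤ p) (s : ℝ) (hs : 0 < s) (C : ℝ) (hC : 0 < C)
    (μ : Measure X) [IsProbabilityMeasure μ]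
    (hμc : ∃ K : Set X, IsCompact K ∧ μ Kᶜ = 0)
    (hreg : ∀ x ∈ measSupport μ, ∀ r : ℝ, 0 < r → r ≤ diam (measSupport μ) →
      ENNReal.ofReal (C⁻¹ * r ^ s) ≤ μ (closedBall x r))
    (N : ℕ) (hN : 0 < N) :
    WpDelta p μ N ≤ ENNReal.ofReal (5 * C ^ (1 / s) / (N : ℝ) ^ (1 / s)) := by
  obtain ⟨K, hK, hK0⟩ := hμc
  rw [measSupport_eq_support] at hreg
  have hNR : (0 : ℝ) < N := by exact_mod_cast hN
  have hN0 : (N : ℝ≥0∞) ≠ 0 := by exact_mod_cast hN.ne'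
  set t : ℝ≥0 := ⟨(C / N) ^ (1 / s), by positivity⟩
  have ht : (t : ℝ) = (C / N) ^ (1 / s) := rfl
  have hball : (t : ℝ) ≤ diam μ.support → ∀ x ∈ μ.support, (N : ℝ≥0∞)⁻¹ ≤ μ (closedBall x t) := by
    intro htd x hx
    convert hreg x hx t (by rw [ht]; positivity) htd using 1
    rw [ht, ← Real.rpow_mul (by positivity), one_div_mul_cancel hs.ne', Real.rpow_one,
      inv_mul_eq_div, div_div_cancel_left' hC.ne', ENNReal.ofReal_inv_of_pos hNR,
      ENNReal.ofReal_natCast]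
  have hsupp := Measure.support_mem_ae_of_isCompact hK (mem_ae_iff.2 hK0)
  obtain ⟨S, -, hSN, hcover⟩ := exists_isCover_encard_le_of_le_measure_closedBall
    (hK.isBounded.subset (Measure.support_subset_of_isClosed hK.isClosed (mem_ae_iff.2 hK0)))
    hball (ENNReal.inv_ne_zero.2 (ENNReal.natCast_ne_top N)) (ENNReal.inv_ne_top.2 hN0)
    (by rw [measure_univ, ENNReal.mul_inv_cancel hN0 (ENNReal.natCast_ne_top N)]) hN
  calc WpDelta p μ N ≤ ((2 * t : ℝ≥0) : ℝ≥0∞) * μ univ ^ (1 / p) :=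
        WpDelta_le_of_ae_exists_edist_le (by linarith) (finite_of_encard_le_coe hSN) hSN
          (hcover.nonempty (Filter.nonempty_of_mem hsupp)) (Filter.Eventually.mono hsupp hcover)
    _ = ENNReal.ofReal (2 * C ^ (1 / s) / (N : ℝ) ^ (1 / s)) := by
        rw [measure_univ, ENNReal.one_rpow, mul_one, ← ENNReal.ofReal_coe_nnreal, NNReal.coe_mul,
          ht, Real.div_rpow hC.le hNR.le, mul_div_assoc]
        norm_num
    _ ≤ ENNReal.ofReal (5 * C ^ (1 / s) / (N : ℝ) ^ (1 / s)) := by gcongr; norm_num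
end
end

section
/- Let (X,d) be a metric space, p ∈ [1,∞), s > 0 and C > 0. Let μ be a Borel probability measure on X such that for every x ∈ X and every r > 0 one has μ(B(x,r)) ≤ C rˢ. Then for every positive integer N, W_p(μ, Δ_N) ≥ (s/(s+p))^{1/p} · C^{-1/s} · N^{-1/s}. -/
/-!
If `ν` is carried by a finite set `S` with `#S ≤ N`, every coupling of `μ` and `ν` moves `x` by at
least `dist(x, S)`, so `W_p(μ, ν)^p ≥ ∫ dist(x, S)^p dμ`. By upper regularity the closed
`t`-neighbourhood of `S`, a union of `N` balls, has mass at most `C N t^s`, hence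
`μ {dist(·, S) > t} ≥ 1 - C N t^s`. Feeding this tail bound into the layer-cake formula and
integrating up to `r = (C N)^(-1/s)`, where it vanishes, gives
`∫ dist(x, S)^p dμ ≥ p ∫₀^r (1 - C N t^s) t^(p-1) dt = s / (s + p) · r^p`.
-/

open MeasureTheory Metric Filter
open scoped ENNReal

noncomputable section

open Set

theorem integral_one_sub_mul_rpow_mul_rpow {a s p r : ℝ} (hp : 0 < p) (hsp : 0 < s + p)
    (hr : 0 ≤ r) :
    ∫ t in (0)..r, (1 - a * t ^ s) * t ^ (p - 1) = r ^ p / p - a * (r ^ (s + p) / (s + p)) := by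
  have hsplit : ∀ᵐ t, t ∈ uIoc 0 r →
      (1 - a * t ^ s) * t ^ (p - 1) = t ^ (p - 1) - a * t ^ (s + p - 1) := by
    refine ae_of_all _ fun t ht => ?_
    rw [uIoc_of_le hr] at ht
    rw [add_sub_assoc, Real.rpow_add ht.1]
    ring
  have h1 : IntervalIntegrable (fun t : ℝ => t ^ (p - 1)) volume 0 r :=
    intervalIntegral.intervalIntegrable_rpow' (by linarith)
  have h2 : IntervalIntegrable (fun t : ℝ => t ^ (s + p - 1)) volume 0 r :=
    intervalIntegral.intervalIntegrable_rpow' (by linarith)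
  rw [intervalIntegral.integral_congr_ae hsplit, intervalIntegral.integral_sub h1 (h2.const_mul a),
    intervalIntegral.integral_const_mul, integral_rpow (Or.inl (by linarith)),
    integral_rpow (Or.inl (by linarith)), sub_add_cancel, sub_add_cancel,
    Real.zero_rpow hp.ne', Real.zero_rpow hsp.ne', sub_zero, sub_zero]

section LayerCake

variable {X : Type*} [MeasurableSpace X] {μ : Measure X}

theorem ofReal_one_sub_le_measure_lt [IsProbabilityMeasure μ] {f : X → ℝ} (hf : Measurable f)
    {t b : ℝ} (hb : 0 ≤ b) (hμf : μ {x | f x ≤ t} ≤ ENNReal.ofReal b) :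
    ENNReal.ofReal (1 - b) ≤ μ {x | t < f x} := by
  have hcompl : {x | t < f x} = {x | f x ≤ t}ᶜ := by ext; simp
  rw [hcompl, prob_compl_eq_one_sub (measurableSet_le hf measurable_const),
    ENNReal.ofReal_sub _ hb, ENNReal.ofReal_one]
  gcongr

theorem ofReal_le_lintegral_rpow_of_measure_le [IsProbabilityMeasure μ] {f : X → ℝ}
    (hf_nn : 0 ≤ f) (hf : Measurable f) {a s p : ℝ} (ha : 0 < a) (hs : 0 < s) (hp : 0 < p)
    (hμf : ∀ t > 0, μ {x | f x ≤ t} ≤ ENNReal.ofReal (a * t ^ s)) :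
    ENNReal.ofReal (s / (s + p) * a ^ (-(p / s))) ≤ ∫⁻ x, ENNReal.ofReal (f x ^ p) ∂μ := by
  set r := a ^ (-(1 / s)) with hr_def
  have hr : 0 < r := Real.rpow_pos_of_pos ha _
  have hrp : r ^ p = a ^ (-(p / s)) := by
    rw [hr_def, ← Real.rpow_mul ha.le]; ring_nf
  have har : a * r ^ s = 1 := by
    rw [hr_def, ← Real.rpow_mul ha.le, neg_mul, one_div_mul_cancel hs.ne', Real.rpow_neg_one,
      mul_inv_cancel₀ ha.ne']
  have hbound : ∀ t ∈ Ioc 0 r, 0 ≤ 1 - a * t ^ s := fun t ht => by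
    rw [sub_nonneg, ← har]; gcongr; exacts [ht.1.le, ht.2]
  have hint : IntegrableOn (fun t : ℝ => (1 - a * t ^ s) * t ^ (p - 1)) (Ioc 0 r) := by
    rw [← intervalIntegrable_iff_integrableOn_Ioc_of_le hr.le]
    exact (intervalIntegral.intervalIntegrable_rpow' (by linarith)).continuousOn_mul
      (continuous_const.sub (continuous_const.mul (Real.continuous_rpow_const hs.le))).continuousOn
  calc ENNReal.ofReal (s / (s + p) * a ^ (-(p / s)))
      = ENNReal.ofReal p * ENNReal.ofReal (∫ t in (0)..r, (1 - a * t ^ s) * t ^ (p - 1)) := by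
        rw [← ENNReal.ofReal_mul hp.le, integral_one_sub_mul_rpow_mul_rpow hp (by linarith) hr.le,
          Real.rpow_add hr, ← mul_div_assoc, ← mul_assoc, har, one_mul, hrp]
        congr 1
        field_simp
        ring
    _ = ENNReal.ofReal p * ∫⁻ t in Ioc 0 r, ENNReal.ofReal ((1 - a * t ^ s) * t ^ (p - 1)) := by
        rw [intervalIntegral.integral_of_le hr.le, ofReal_integral_eq_lintegral_ofReal hint]
        filter_upwards [self_mem_ae_restrict measurableSet_Ioc] with t ht
        exact mul_nonneg (hbound t ht) (Real.rpow_nonneg ht.1.le _)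
    _ ≤ ENNReal.ofReal p * ∫⁻ t in Ioc 0 r, μ {x | t < f x} * ENNReal.ofReal (t ^ (p - 1)) := by
        refine mul_le_mul_right (setLIntegral_mono' measurableSet_Ioc fun t ht => ?_) _
        rw [ENNReal.ofReal_mul (hbound t ht)]
        gcongr
        exact ofReal_one_sub_le_measure_lt hf (by have := ht.1; positivity) (hμf t ht.1)
    _ ≤ ENNReal.ofReal p * ∫⁻ t in Ioi 0, μ {x | t < f x} * ENNReal.ofReal (t ^ (p - 1)) :=
        mul_le_mul_right (lintegral_mono_set Ioc_subset_Ioi_self) _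
    _ = ∫⁻ x, ENNReal.ofReal (f x ^ p) ∂μ :=
        (lintegral_rpow_eq_lintegral_meas_lt_mul μ (ae_of_all _ hf_nn) hf.aemeasurable hp).symm

end LayerCake

section Transport

variable {X : Type*} [PseudoMetricSpace X]

theorem IsCompact.setOf_infDist_le_subset_biUnion_closedBall {S : Set X} (hS : IsCompact S)
    (hne : S.Nonempty) (t : ℝ) : {x | infDist x S ≤ t} ⊆ ⋃ y ∈ S, closedBall y t := by
  intro x hx
  obtain ⟨y, hyS, hy⟩ := hS.exists_infDist_eq_dist hne x
  exact mem_biUnion hyS (by rw [mem_closedBall, ← hy]; exact hx)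

theorem measure_setOf_infDist_le_le_card_mul [MeasurableSpace X] {μ : Measure X}
    {S : Finset X} (hS : S.Nonempty) {t : ℝ} {c : ℝ≥0∞} (hball : ∀ x, μ (closedBall x t) ≤ c) :
    μ {x | infDist x S ≤ t} ≤ S.card * c :=
  calc μ {x | infDist x S ≤ t} ≤ μ (⋃ y ∈ S, closedBall y t) :=
        measure_mono (S.finite_toSet.isCompact.setOf_infDist_le_subset_biUnion_closedBall hS t)
    _ ≤ ∑ y ∈ S, μ (closedBall y t) := measure_biUnion_finset_le _ _
    _ ≤ S.card * c := by simpa using Finset.sum_le_sum fun y _ => hball y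

theorem lintegral_infDist_rpow_le_of_map_fst [MeasurableSpace X] [OpensMeasurableSpace X]
    {μ : Measure X} {π : Measure (X × X)} {S : Set X} {p : ℝ} (hp : 0 ≤ p) (hπ : π.map Prod.fst = μ)
    (hS : ∀ᵐ z ∂π, z.2 ∈ S) :
    ∫⁻ x, ENNReal.ofReal (infDist x S ^ p) ∂μ ≤ ∫⁻ z, edist z.1 z.2 ^ p ∂π := by
  subst hπ
  rw [lintegral_map ((continuous_infDist_pt S).measurable.pow_const p).ennreal_ofReal
    measurable_fst]
  refine lintegral_mono_ae (hS.mono fun z hz => ?_)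
  rw [← ENNReal.ofReal_rpow_of_nonneg infDist_nonneg hp, edist_dist]
  gcongr
  exact infDist_le_dist_of_mem hz

end Transport

theorem wasserstein_ge_of_upper_regular
    {X : Type*} [MetricSpace X] [MeasurableSpace X] [BorelSpace X]
    (p : ℝ) (hp : 1 ≤ p) (s : ℝ) (hs : 0 < s) (C : ℝ) (hC : 0 < C)
    (μ : Measure X) [IsProbabilityMeasure μ]
    (hreg : ∀ x : X, ∀ r : ℝ, 0 < r → μ (closedBall x r) ≤ ENNReal.ofReal (C * r ^ s))
    (N : ℕ) (hN : 0 < N) :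
    ENNReal.ofReal ((s / (s + p)) ^ (1 / p) * C ^ (-(1 / s)) * (N : ℝ) ^ (-(1 / s)))
      ≤ WpDelta p μ N := by
  have hp0 : 0 < p := by linarith
  refine le_iInf₂ fun ν ⟨⟨S, hSN, hνS⟩, hmass⟩ => le_iInf₂ fun π ⟨hπμ, hπν⟩ => ?_
  have hS : S.Nonempty := by
    rw [Finset.nonempty_iff_ne_empty]
    rintro rfl
    simp [hmass] at hνS
  have hcover : ∀ t > 0, μ {x | infDist x S ≤ t} ≤ ENNReal.ofReal (C * N * t ^ s) :=
    fun t ht => (measure_setOf_infDist_le_le_card_mul hS (hreg · t ht)).trans <| by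
      rw [show C * N * t ^ s = N * (C * t ^ s) by ring, ENNReal.ofReal_mul (Nat.cast_nonneg N),
        ENNReal.ofReal_natCast]
      gcongr
  have hmoment := ofReal_le_lintegral_rpow_of_measure_le (fun x => infDist_nonneg)
    (continuous_infDist_pt _).measurable (by positivity) hs hp0 hcover
  have htransport := lintegral_infDist_rpow_le_of_map_fst (S := S) hp0.le hπμ
    (ae_of_ae_map measurable_snd.aemeasurable (hπν ▸ mem_ae_iff.2 hνS))
  have hexp : -(p / s) * (1 / p) = -(1 / s) := by field_simp
  calc _ = ENNReal.ofReal (s / (s + p) * (C * N) ^ (-(p / s))) ^ (1 / p) := by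
        rw [ENNReal.ofReal_rpow_of_nonneg (by positivity) (by positivity),
          Real.mul_rpow (by positivity) (by positivity), ← Real.rpow_mul (by positivity),
          hexp, Real.mul_rpow hC.le (by positivity), mul_assoc]
    _ ≤ _ := by gcongr; exact hmoment.trans htransport
end
end

section
/- (Monotony lemma) Let (X,d) be a metric space, p ∈ [1,∞), and let μ and ν be finite compactly supported Borel measures on X of equal total mass. If μ̃ is a measure with μ̃ ≤ μ (i.e. μ̃(A) ≤ μ(A) for every Borel set A), then there exists a measure ν̃ with ν̃ ≤ ν (in particular supp ν̃ ⊂ supp ν), of the same total mass as μ̃, such that W_p(μ̃, ν̃) ≤ W_p(μ, ν). -/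
open MeasureTheory Metric Filter
open scoped ENNReal

noncomputable section

/-!
Restricting a transport plan `π` from `μ` to `ν` to the part of it with first marginal `μ' ≤ μ`
(reweight `π` by `dμ'/dμ` of the first coordinate) gives a plan from `μ'` to some `ν₁ ≤ ν` that
costs no more than `π`. Optimal plans need not be at hand, so this is applied to almost optimal
plans, and the resulting targets are compared through their densities `dν₁/dν ∈ L²(ν)`: those
reachable at cost `≤ A + 1/N` form a convex set, and since moving a mass `δ` of the target changes
the cost by at most `diam (supp μ ∪ supp ν) ^ p * δ`, the closure of that set stays within cost
`A + 1/N`. A decreasing sequence of nonempty bounded closed convex sets in a Hilbert space has a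
common point (their points of minimal norm form a Cauchy sequence); its density defines `ν'`.
-/

open Set

section Coupling

variable {X : Type*} [MeasurableSpace X] {μ ν μ₁ μ₂ ν₁ ν₂ : Measure X} {π π₁ π₂ : Measure (X × X)}

theorem IsCoupling.measure_univ_eq_left (h : IsCoupling μ ν π) : π univ = μ univ := by
  rw [← h.1, Measure.map_apply measurable_fst .univ, preimage_univ]

theorem IsCoupling.measure_univ_eq_right (h : IsCoupling μ ν π) : π univ = ν univ := by
  rw [← h.2, Measure.map_apply measurable_snd .univ, preimage_univ]

theorem IsCoupling.add (h₁ : IsCoupling μ₁ ν₁ π₁) (h₂ : IsCoupling μ₂ ν₂ π₂) :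
    IsCoupling (μ₁ + μ₂) (ν₁ + ν₂) (π₁ + π₂) := by
  constructor <;> simp only [Measure.map_add _ _ measurable_fst, Measure.map_add _ _ measurable_snd,
    h₁.1, h₁.2, h₂.1, h₂.2]

theorem IsCoupling.smul (c : ℝ≥0∞) (h : IsCoupling μ ν π) : IsCoupling (c • μ) (c • ν) (c • π) :=
  ⟨by rw [Measure.map_smul, h.1], by rw [Measure.map_smul, h.2]⟩

theorem isCoupling_smul_prod [IsFiniteMeasure μ] [IsFiniteMeasure ν] (h : μ univ = ν univ) :
    IsCoupling μ ν ((μ univ)⁻¹ • μ.prod ν) := by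
  rcases eq_or_ne (μ univ) 0 with h0 | h0
  · have hν : ν = 0 := Measure.measure_univ_eq_zero.mp (h ▸ h0)
    rw [Measure.measure_univ_eq_zero.mp h0, hν]
    constructor <;> simp
  constructor
  · rw [Measure.map_smul, Measure.map_fst_prod, ← h, smul_smul,
      ENNReal.inv_mul_cancel h0 (measure_ne_top μ _), one_smul]
  · rw [Measure.map_smul, Measure.map_snd_prod, smul_smul,
      ENNReal.inv_mul_cancel h0 (measure_ne_top μ _), one_smul]

theorem map_withDensity_comp {Y : Type*} [MeasurableSpace Y] (π : Measure X) {q : X → Y}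
    (hq : Measurable q) {f : Y → ℝ≥0∞} (hf : Measurable f) :
    (π.withDensity (f ∘ q)).map q = (π.map q).withDensity f := by
  ext s hs
  rw [Measure.map_apply hq hs, withDensity_apply _ (hq hs), withDensity_apply _ hs,
    setLIntegral_map hs hf hq, Function.comp_def]

theorem withDensity_le_self {f : X → ℝ≥0∞} (hf : ∀ᵐ x ∂μ, f x ≤ 1) : μ.withDensity f ≤ μ :=
  (withDensity_mono hf).trans_eq withDensity_one

theorem exists_le_map_eq_of_le {Y : Type*} [MeasurableSpace Y] {π : Measure X} [IsFiniteMeasure π]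
    {q : X → Y} (hq : Measurable q) {ρ : Measure Y} (hρ : ρ ≤ π.map q) :
    ∃ π' ≤ π, π'.map q = ρ := by
  have : IsFiniteMeasure ρ := isFiniteMeasure_of_le _ hρ
  set f : Y → ℝ≥0∞ := fun y => min (ρ.rnDeriv (π.map q) y) 1
  have hf : Measurable f := (Measure.measurable_rnDeriv _ _).min measurable_const
  have hρf : (π.map q).withDensity f = ρ := by
    have hfρ : f =ᵐ[π.map q] ρ.rnDeriv (π.map q) := by
      filter_upwards [Measure.rnDeriv_le_one_of_le hρ] with y hy using min_eq_left hy
    rw [withDensity_congr_ae hfρ,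
      Measure.withDensity_rnDeriv_eq _ _ (Measure.absolutelyContinuous_of_le hρ)]
  exact ⟨π.withDensity (f ∘ q), withDensity_le_self (ae_of_all _ fun _ => min_le_right _ _),
    by rw [map_withDensity_comp π hq hf, hρf]⟩

theorem IsCoupling.isFiniteMeasure [IsFiniteMeasure μ] (h : IsCoupling μ ν π) :
    IsFiniteMeasure π :=
  ⟨h.measure_univ_eq_left ▸ measure_lt_top μ _⟩

theorem IsCoupling.exists_le_of_le_left [IsFiniteMeasure μ] (h : IsCoupling μ ν π) (hμ : μ₁ ≤ μ) :
    ∃ π₁ ≤ π, ∃ ν₁ ≤ ν, IsCoupling μ₁ ν₁ π₁ := by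
  have := h.isFiniteMeasure
  obtain ⟨π₁, hπ₁, hfst⟩ := exists_le_map_eq_of_le measurable_fst (h.1 ▸ hμ)
  exact ⟨π₁, hπ₁, π₁.map Prod.snd, h.2 ▸ Measure.map_mono hπ₁ measurable_snd, hfst, rfl⟩

end Coupling

section TransportCost

variable {X : Type*} [PseudoEMetricSpace X] [MeasurableSpace X] {p : ℝ} {μ ν ν₁ ν₂ : Measure X}
  {π : Measure (X × X)}

def transportCost (p : ℝ) (μ ν : Measure X) : ℝ≥0∞ :=
  ⨅ (π : Measure (X × X)) (_ : IsCoupling μ ν π), ∫⁻ z, edist z.1 z.2 ^ p ∂π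

theorem transportCost_le (h : IsCoupling μ ν π) :
    transportCost p μ ν ≤ ∫⁻ z, edist z.1 z.2 ^ p ∂π :=
  iInf₂_le π h

theorem le_transportCost_add {a c : ℝ≥0∞}
    (h : ∀ π, IsCoupling μ ν π → a ≤ ∫⁻ z, edist z.1 z.2 ^ p ∂π + c) :
    a ≤ transportCost p μ ν + c := by
  simpa only [transportCost, ENNReal.iInf_add] using le_iInf₂ h

theorem exists_isCoupling_lintegral_le [IsFiniteMeasure μ] [IsFiniteMeasure ν]
    (hμν : μ univ = ν univ) {ε : ℝ≥0∞} (hε : ε ≠ 0) :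
    ∃ π, IsCoupling μ ν π ∧ ∫⁻ z, edist z.1 z.2 ^ p ∂π ≤ transportCost p μ ν + ε := by
  by_cases htop : transportCost p μ ν = ∞
  · exact ⟨_, isCoupling_smul_prod hμν, by simp [htop]⟩
  · obtain ⟨π, hlt⟩ := iInf_lt_iff.mp (ENNReal.lt_add_right htop hε)
    obtain ⟨hπ, hlt⟩ := iInf_lt_iff.mp hlt
    exact ⟨π, hπ, hlt.le⟩

theorem IsCoupling.lintegral_edist_rpow_le (h : IsCoupling μ ν π) (hp : 0 ≤ p) {K L : Set X}
    (hK : μ Kᶜ = 0) (hL : ν Lᶜ = 0) :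
    ∫⁻ z, edist z.1 z.2 ^ p ∂π ≤ ediam (K ∪ L) ^ p * μ univ := by
  have hfst : ∀ᵐ z ∂π, z.1 ∈ K := ae_iff.mpr <| nonpos_iff_eq_zero.mp <|
    (Measure.le_map_apply measurable_fst.aemeasurable Kᶜ).trans_eq (h.1 ▸ hK)
  have hsnd : ∀ᵐ z ∂π, z.2 ∈ L := ae_iff.mpr <| nonpos_iff_eq_zero.mp <|
    (Measure.le_map_apply measurable_snd.aemeasurable Lᶜ).trans_eq (h.2 ▸ hL)
  calc ∫⁻ z, edist z.1 z.2 ^ p ∂π ≤ ∫⁻ _, ediam (K ∪ L) ^ p ∂π := by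
        refine lintegral_mono_ae ?_
        filter_upwards [hfst, hsnd] with z hz₁ hz₂
        exact ENNReal.rpow_le_rpow
          (edist_le_ediam_of_mem (mem_union_left _ hz₁) (mem_union_right _ hz₂)) hp
    _ = ediam (K ∪ L) ^ p * μ univ := by rw [lintegral_const, h.measure_univ_eq_left]

/-- Of a plan `π` from `μ` to `ν₁`, keep the part `π₀` that transports mass into `ρ`, and send the
rest of `μ`, of mass `ν₁ univ - ρ univ`, to `ν₂ - ρ` by a product plan: each unit of it costs at
most `ediam (K ∪ L) ^ p`. -/
theorem transportCost_le_add_of_le [IsFiniteMeasure μ] [IsFiniteMeasure ν₁] [IsFiniteMeasure ν₂]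
    (hp : 0 ≤ p) {ρ : Measure X} (hρ₁ : ρ ≤ ν₁) (hρ₂ : ρ ≤ ν₂) (hmass : ν₁ univ = ν₂ univ)
    {K L : Set X} (hK : μ Kᶜ = 0) (hL : ν₂ Lᶜ = 0) :
    transportCost p μ ν₂ ≤ transportCost p μ ν₁ + ediam (K ∪ L) ^ p * (ν₁ univ - ρ univ) := by
  refine le_transportCost_add fun π hπ => ?_
  have := hπ.isFiniteMeasure
  obtain ⟨π₀, hπ₀, hπ₀ρ⟩ := exists_le_map_eq_of_le measurable_snd (hπ.2 ▸ hρ₁)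
  have hπ₀c : IsCoupling (π₀.map Prod.fst) ρ π₀ := ⟨rfl, hπ₀ρ⟩
  have hμ₀ : π₀.map Prod.fst ≤ μ := hπ.1 ▸ Measure.map_mono hπ₀ measurable_fst
  have : IsFiniteMeasure (π₀.map Prod.fst) := isFiniteMeasure_of_le _ hμ₀
  have : IsFiniteMeasure ρ := isFiniteMeasure_of_le _ hρ₁
  have hrest : (μ - π₀.map Prod.fst) univ = ν₁ univ - ρ univ := by
    rw [Measure.sub_apply .univ hμ₀, ← hπ₀c.measure_univ_eq_left, hπ₀c.measure_univ_eq_right,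
      ← hπ.measure_univ_eq_left, hπ.measure_univ_eq_right]
  have hrest' : (ν₂ - ρ) univ = ν₁ univ - ρ univ := by rw [Measure.sub_apply .univ hρ₂, hmass]
  obtain ⟨σ, hσ⟩ : ∃ σ, IsCoupling (μ - π₀.map Prod.fst) (ν₂ - ρ) σ :=
    ⟨_, isCoupling_smul_prod (hrest.trans hrest'.symm)⟩
  have hτ : IsCoupling μ ν₂ (σ + π₀) := by
    simpa only [Measure.sub_add_cancel_of_le hμ₀, Measure.sub_add_cancel_of_le hρ₂]
      using hσ.add hπ₀c
  calc transportCost p μ ν₂ ≤ ∫⁻ z, edist z.1 z.2 ^ p ∂(σ + π₀) := transportCost_le hτ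
    _ = ∫⁻ z, edist z.1 z.2 ^ p ∂σ + ∫⁻ z, edist z.1 z.2 ^ p ∂π₀ := lintegral_add_measure _ _ _
    _ ≤ ediam (K ∪ L) ^ p * (ν₁ univ - ρ univ) + ∫⁻ z, edist z.1 z.2 ^ p ∂π := by
      gcongr
      · rw [← hrest]
        exact hσ.lintegral_edist_rpow_le hp (Measure.absolutelyContinuous_of_le Measure.sub_le hK)
          (Measure.absolutelyContinuous_of_le Measure.sub_le hL)
    _ = _ := add_comm _ _

end TransportCost

theorem Wp_eq_transportCost_rpow {X : Type*} [PseudoMetricSpace X] [MeasurableSpace X] {p : ℝ}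
    (hp : 0 < p) (μ ν : Measure X) : Wp p μ ν = transportCost p μ ν ^ (1 / p) := by
  simp only [Wp, transportCost, ← ENNReal.orderIsoRpow_apply (1 / p) (one_div_pos.mpr hp),
    OrderIso.map_iInf]

theorem nonempty_iInter_of_antitone_of_convex {E : Type*} [NormedAddCommGroup E]
    [InnerProductSpace ℝ E] [CompleteSpace E] {C : ℕ → Set E} (hC : Antitone C)
    (hne : ∀ n, (C n).Nonempty) (hclosed : ∀ n, IsClosed (C n)) (hconv : ∀ n, Convex ℝ (C n))
    (hbdd : Bornology.IsBounded (C 0)) : (⋂ n, C n).Nonempty := by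
  have hmin : ∀ n, ∃ x ∈ C n, ∀ y ∈ C n, ‖x‖ ≤ ‖y‖ := fun n => by
    obtain ⟨x, hx, hxinf⟩ := exists_norm_eq_iInf_of_complete_convex (hne n)
      (hclosed n).isComplete (hconv n) 0
    refine ⟨x, hx, fun y hy => ?_⟩
    have := hxinf ▸ ciInf_le ⟨0, by rintro _ ⟨w, rfl⟩; positivity⟩ (⟨y, hy⟩ : C n)
    simpa using this
  choose x hxC hxmin using hmin
  obtain ⟨R, hR⟩ := (isBounded_iff_forall_norm_le.mp hbdd)
  set s : ℕ → ℝ := fun n => ‖x n‖ ^ 2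
  have hs_mono : Monotone s := fun m n hmn => by
    have := hxmin m (x n) (hC hmn (hxC n))
    simp only [s]; gcongr
  have hs_bdd : BddAbove (range s) :=
    ⟨R ^ 2, by rintro _ ⟨n, rfl⟩; simp only [s]; gcongr; exact hR _ (hC (Nat.zero_le n) (hxC n))⟩
  -- the midpoint of `x m` and `x n` lies in `C m`, so the parallelogram law controls `x m - x n`
  have hclose : ∀ m n, m ≤ n → ‖x m - x n‖ ^ 2 ≤ 2 * (s n - s m) := fun m n hmn => by
    have hmid : ‖x m‖ ≤ ‖(1 / 2 : ℝ) • (x m + x n)‖ := hxmin m _ <| by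
      simpa [smul_add] using
        hconv m (hxC m) (hC hmn (hxC n)) (by norm_num : (0 : ℝ) ≤ 1 / 2) (by norm_num) (by norm_num)
    rw [norm_smul, Real.norm_of_nonneg (by norm_num)] at hmid
    have hpar := parallelogram_law_with_norm ℝ (x m) (x n)
    simp only [s]
    nlinarith [norm_nonneg (x m), norm_nonneg (x m + x n)]
  have hcauchy : CauchySeq x := by
    refine Metric.cauchySeq_iff'.mpr fun ε hε => ?_
    obtain ⟨N, hN⟩ := exists_lt_of_lt_ciSup (sub_lt_self (⨆ n, s n) (by positivity : 0 < ε ^ 2 / 2))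
    refine ⟨N, fun n hn => ?_⟩
    have h1 := hclose N n hn
    have h2 : s n ≤ ⨆ n, s n := le_ciSup hs_bdd n
    rw [dist_eq_norm, norm_sub_rev]
    nlinarith [norm_nonneg (x N - x n)]
  obtain ⟨y, hy⟩ := cauchySeq_tendsto_of_complete hcauchy
  exact ⟨y, mem_iInter.mpr fun n => (hclosed n).mem_of_tendsto hy <|
    (eventually_ge_atTop n).mono fun m hm => hC hm (hxC m)⟩

theorem closure_subset_sep_of_le_add_edist {E : Type*} [PseudoEMetricSpace E] {s t : Set E}
    {Φ : E → ℝ≥0∞} {C c : ℝ≥0∞} (hs : IsClosed s) (hts : t ⊆ s) (hC : C ≠ ∞)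
    (hΦ : ∀ u ∈ s, ∀ v ∈ s, Φ u ≤ Φ v + C * edist u v) (ht : ∀ v ∈ t, Φ v ≤ c) :
    closure t ⊆ {u ∈ s | Φ u ≤ c} := by
  intro u hu
  refine ⟨closure_minimal hts hs hu, ENNReal.le_of_forall_pos_le_add fun ε hε _ => ?_⟩
  obtain ⟨δ, hδ, hCδ⟩ := ENNReal.exists_nnreal_pos_mul_lt hC (b := ε) (by exact_mod_cast hε.ne')
  obtain ⟨v, hv, huv⟩ := EMetric.mem_closure_iff.mp hu δ (by exact_mod_cast hδ)
  calc Φ u ≤ Φ v + C * edist u v := hΦ u (closure_minimal hts hs hu) v (hts hv)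
    _ ≤ c + ε := by
      gcongr
      · exact ht v hv
      · rw [mul_comm]; exact (mul_le_mul_left huv.le C).trans hCδ.le

section SubDensities

variable {X : Type*} [MeasurableSpace X] {ν : Measure X} {r : ℝ}

def subDensities (ν : Measure X) (r : ℝ) : Set (Lp ℝ 2 ν) :=
  {u | (∀ᵐ x ∂ν, u x ∈ Icc 0 1) ∧ ∫ x, u x ∂ν = r}

theorem setOf_ae_mem_Icc_eq [IsFiniteMeasure ν] :
    {u : Lp ℝ 2 ν | ∀ᵐ x ∂ν, u x ∈ Icc 0 1} = Icc 0 (Lp.const 2 ν 1) := by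
  ext u
  change (∀ᵐ x ∂ν, u x ∈ Icc 0 1) ↔ 0 ≤ u ∧ u ≤ Lp.const 2 ν 1
  rw [← Lp.coeFn_nonneg, ← Lp.coeFn_le]
  refine ⟨fun h => ⟨h.mono fun x hx => hx.1, ?_⟩, fun ⟨h0, h1⟩ => ?_⟩
  · filter_upwards [h, Lp.coeFn_const 2 ν (1 : ℝ)] with x hx hc
    exact hx.2.trans_eq hc.symm
  · filter_upwards [h0, h1, Lp.coeFn_const 2 ν (1 : ℝ)] with x hx0 hx1 hc
    exact ⟨hx0, hx1.trans_eq hc⟩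

theorem integral_eq_inner_const [IsFiniteMeasure ν] (u : Lp ℝ 2 ν) :
    ∫ x, u x ∂ν = inner ℝ (Lp.const 2 ν (1 : ℝ)) u := by
  rw [← indicatorConstLp_univ, L2.inner_indicatorConstLp_one, Measure.restrict_univ]

theorem isClosed_subDensities [IsFiniteMeasure ν] : IsClosed (subDensities ν r) := by
  change IsClosed ({u : Lp ℝ 2 ν | ∀ᵐ x ∂ν, u x ∈ Icc 0 1} ∩ {u | ∫ x, u x ∂ν = r})
  refine IsClosed.inter ?_ ?_
  · rw [setOf_ae_mem_Icc_eq]; exact isClosed_Icc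
  · simp only [integral_eq_inner_const]
    exact isClosed_eq (continuous_const.inner continuous_id) continuous_const

theorem convex_subDensities [IsFiniteMeasure ν] : Convex ℝ (subDensities ν r) := by
  rintro u ⟨hu, hur⟩ v ⟨hv, hvr⟩ a b ha hb hab
  refine ⟨?_, ?_⟩
  · filter_upwards [hu, hv, Lp.coeFn_add (a • u) (b • v), Lp.coeFn_smul a u, Lp.coeFn_smul b v]
      with x hux hvx hadd hau hbv
    rw [hadd, Pi.add_apply, hau, hbv]
    exact convex_Icc (0 : ℝ) 1 hux hvx ha hb hab
  · rw [integral_eq_inner_const] at hur hvr ⊢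
    rw [inner_add_right, real_inner_smul_right, real_inner_smul_right, hur, hvr, ← add_mul, hab,
      one_mul]

theorem isBounded_subDensities [IsFiniteMeasure ν] : Bornology.IsBounded (subDensities ν r) := by
  refine (Metric.isBounded_closedBall (x := 0) (r := ‖Lp.const 2 ν (1 : ℝ)‖)).subset ?_
  rintro u ⟨hu, -⟩
  rw [mem_closedBall_zero_iff]
  refine Lp.norm_le_norm_of_ae_le ?_
  filter_upwards [hu, Lp.coeFn_const 2 ν (1 : ℝ)] with _ hx h1
  rw [h1, Function.const_apply, norm_one, Real.norm_of_nonneg hx.1]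
  exact hx.2

theorem withDensity_ofReal_apply_univ {f : X → ℝ} (hf : Integrable f ν) (hf0 : 0 ≤ᵐ[ν] f) :
    ν.withDensity (fun x => ENNReal.ofReal (f x)) univ = ENNReal.ofReal (∫ x, f x ∂ν) := by
  rw [withDensity_apply _ .univ, Measure.restrict_univ, ofReal_integral_eq_lintegral_ofReal hf hf0]

theorem withDensity_ofReal_le_of_mem_subDensities {u : Lp ℝ 2 ν} (hu : u ∈ subDensities ν r) :
    ν.withDensity (fun x => ENNReal.ofReal (u x)) ≤ ν :=
  withDensity_le_self (hu.1.mono fun _ hx => ENNReal.ofReal_le_one.mpr hx.2)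

theorem withDensity_ofReal_univ_of_mem_subDensities [IsFiniteMeasure ν] {u : Lp ℝ 2 ν}
    (hu : u ∈ subDensities ν r) :
    ν.withDensity (fun x => ENNReal.ofReal (u x)) univ = ENNReal.ofReal r := by
  rw [withDensity_ofReal_apply_univ ((Lp.memLp u).integrable one_le_two)
    (hu.1.mono fun _ hx => hx.1), hu.2]

theorem exists_mem_subDensities_withDensity_eq [IsFiniteMeasure ν] {ν₁ : Measure X} (h : ν₁ ≤ ν) :
    ∃ u ∈ subDensities ν (ν₁ univ).toReal, ν.withDensity (fun x => ENNReal.ofReal (u x)) = ν₁ := by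
  have : IsFiniteMeasure ν₁ := isFiniteMeasure_of_le _ h
  have hg := Measure.rnDeriv_le_one_of_le h
  have hmem : MemLp (fun x => (ν₁.rnDeriv ν x).toReal) 2 ν := by
    refine MemLp.of_bound (Measure.measurable_rnDeriv _ _).ennreal_toReal.aestronglyMeasurable 1 ?_
    filter_upwards [hg] with x hx
    rw [Real.norm_of_nonneg ENNReal.toReal_nonneg]
    exact ENNReal.toReal_le_of_le_ofReal zero_le_one (hx.trans_eq ENNReal.ofReal_one.symm)
  set u := hmem.toLp
  have hu01 : ∀ᵐ x ∂ν, u x ∈ Icc 0 1 := by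
    filter_upwards [hmem.coeFn_toLp, hg] with x hx hx1
    rw [hx]
    exact ⟨ENNReal.toReal_nonneg,
      ENNReal.toReal_le_of_le_ofReal zero_le_one (hx1.trans_eq ENNReal.ofReal_one.symm)⟩
  have hdens : ν.withDensity (fun x => ENNReal.ofReal (u x)) = ν₁ := by
    rw [← Measure.withDensity_rnDeriv_eq _ _ (Measure.absolutelyContinuous_of_le h)]
    refine withDensity_congr_ae ?_
    filter_upwards [hmem.coeFn_toLp, hg] with x hx hx1
    rw [hx, ENNReal.ofReal_toReal (ne_top_of_le_ne_top ENNReal.one_ne_top hx1)]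
  have hu0 : 0 ≤ᵐ[ν] u := hu01.mono fun _ hx => hx.1
  refine ⟨u, ⟨hu01, ?_⟩, hdens⟩
  rw [← hdens, withDensity_ofReal_apply_univ ((Lp.memLp u).integrable one_le_two) hu0,
    ENNReal.toReal_ofReal (integral_nonneg_of_ae hu0)]

theorem withDensity_ofReal_add_smul {u v : Lp ℝ 2 ν} (hu : 0 ≤ᵐ[ν] u) (hv : 0 ≤ᵐ[ν] v) {a b : ℝ}
    (ha : 0 ≤ a) (hb : 0 ≤ b) :
    ν.withDensity (fun x => ENNReal.ofReal ((a • u + b • v) x)) =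
      ENNReal.ofReal a • ν.withDensity (fun x => ENNReal.ofReal (u x)) +
        ENNReal.ofReal b • ν.withDensity (fun x => ENNReal.ofReal (v x)) := by
  have hum := (Lp.stronglyMeasurable u).measurable.ennreal_ofReal
  have hvm := (Lp.stronglyMeasurable v).measurable.ennreal_ofReal
  rw [← withDensity_smul _ hum, ← withDensity_smul _ hvm, ← withDensity_add_left (hum.const_smul _)]
  refine withDensity_congr_ae ?_
  filter_upwards [hu, hv, Lp.coeFn_add (a • u) (b • v), Lp.coeFn_smul a u, Lp.coeFn_smul b v]
    with x hux hvx hadd hau hbv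
  rw [hadd, Pi.add_apply, hau, hbv, Pi.smul_apply, Pi.smul_apply, smul_eq_mul, smul_eq_mul,
    ENNReal.ofReal_add (mul_nonneg ha hux) (mul_nonneg hb hvx), ENNReal.ofReal_mul ha,
    ENNReal.ofReal_mul hb]
  rfl

theorem lintegral_ofReal_sub_le_edist (u v : Lp ℝ 2 ν) :
    ∫⁻ x, (ENNReal.ofReal (u x) - ENNReal.ofReal (v x)) ∂ν ≤ edist u v * ν univ ^ (1 / 2 : ℝ) := by
  have hsub : ∀ x, ENNReal.ofReal (u x) - ENNReal.ofReal (v x) ≤ ‖(⇑u - ⇑v) x‖ₑ := fun x => by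
    rw [tsub_le_iff_right, Pi.sub_apply, Real.enorm_eq_ofReal_abs]
    refine (ENNReal.ofReal_le_ofReal ?_).trans ENNReal.ofReal_add_le
    linarith [le_abs_self (u x - v x)]
  calc ∫⁻ x, (ENNReal.ofReal (u x) - ENNReal.ofReal (v x)) ∂ν ≤ eLpNorm (⇑u - ⇑v) 1 ν := by
        rw [eLpNorm_one_eq_lintegral_enorm]; exact lintegral_mono hsub
    _ ≤ eLpNorm (⇑u - ⇑v) 2 ν * ν univ ^ (1 / (1 : ℝ≥0∞).toReal - 1 / (2 : ℝ≥0∞).toReal) :=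
        eLpNorm_le_eLpNorm_mul_rpow_measure_univ one_le_two
          ((Lp.aestronglyMeasurable u).sub (Lp.aestronglyMeasurable v))
    _ = edist u v * ν univ ^ (1 / 2 : ℝ) := by rw [Lp.edist_def]; norm_num

end SubDensities

section DensityCouplings

variable {X : Type*} [PseudoEMetricSpace X] [MeasurableSpace X] {p : ℝ} {μ ν : Measure X}
  [IsFiniteMeasure ν] {r : ℝ}

theorem transportCost_withDensity_le_add_edist [IsFiniteMeasure μ] (hp : 0 ≤ p) {K L : Set X}
    (hK : μ Kᶜ = 0) (hL : ν Lᶜ = 0) {u v : Lp ℝ 2 ν} (hu : u ∈ subDensities ν r) (hv : v ∈ subDensities ν r) :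
    transportCost p μ (ν.withDensity fun x => ENNReal.ofReal (u x)) ≤
      transportCost p μ (ν.withDensity fun x => ENNReal.ofReal (v x)) +
        ediam (K ∪ L) ^ p * ν univ ^ (1 / 2 : ℝ) * edist u v := by
  set fu : X → ℝ≥0∞ := fun x => ENNReal.ofReal (u x)
  set fv : X → ℝ≥0∞ := fun x => ENNReal.ofReal (v x)
  have := isFiniteMeasure_of_le _ (withDensity_ofReal_le_of_mem_subDensities hu)
  have := isFiniteMeasure_of_le _ (withDensity_ofReal_le_of_mem_subDensities hv)
  have hmin : Measurable fun x => min (fv x) (fu x) :=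
    (Lp.stronglyMeasurable v).measurable.ennreal_ofReal.min
      (Lp.stronglyMeasurable u).measurable.ennreal_ofReal
  have hrest : ν.withDensity fv univ - ν.withDensity (fun x => min (fv x) (fu x)) univ ≤
      edist u v * ν univ ^ (1 / 2 : ℝ) := by
    refine le_trans ?_ (edist_comm u v ▸ lintegral_ofReal_sub_le_edist v u)
    rw [tsub_le_iff_right, withDensity_apply _ .univ, withDensity_apply _ .univ,
      Measure.restrict_univ, ← lintegral_add_right _ hmin]
    exact lintegral_mono fun x => (tsub_add_min (a := fv x) (b := fu x)).ge
  calc transportCost p μ (ν.withDensity fu)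
      ≤ transportCost p μ (ν.withDensity fv) + ediam (K ∪ L) ^ p *
          (ν.withDensity fv univ - ν.withDensity (fun x => min (fv x) (fu x)) univ) :=
        transportCost_le_add_of_le hp (withDensity_mono (ae_of_all _ fun _ => min_le_left _ _))
          (withDensity_mono (ae_of_all _ fun _ => min_le_right _ _))
          (by rw [withDensity_ofReal_univ_of_mem_subDensities hu,
            withDensity_ofReal_univ_of_mem_subDensities hv])
          hK (withDensity_absolutelyContinuous ν _ hL)
    _ ≤ _ := by rw [mul_assoc, mul_comm (ν univ ^ _)]; gcongr

theorem convex_subDensities_exists_isCoupling_lintegral_le (c : ℝ≥0∞) :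
    Convex ℝ {u ∈ subDensities ν r |
      ∃ π, IsCoupling μ (ν.withDensity fun x => ENNReal.ofReal (u x)) π ∧
        ∫⁻ z, edist z.1 z.2 ^ p ∂π ≤ c} := by
  rintro u ⟨hu, π₁, hπ₁, hc₁⟩ v ⟨hv, π₂, hπ₂, hc₂⟩ a b ha hb hab
  have hab' : ENNReal.ofReal a + ENNReal.ofReal b = 1 := by
    rw [← ENNReal.ofReal_add ha hb, hab, ENNReal.ofReal_one]
  refine ⟨convex_subDensities hu hv ha hb hab,
    ENNReal.ofReal a • π₁ + ENNReal.ofReal b • π₂, ?_, ?_⟩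
  · have := (hπ₁.smul (ENNReal.ofReal a)).add (hπ₂.smul (ENNReal.ofReal b))
    rwa [← add_smul, hab', one_smul,
      ← withDensity_ofReal_add_smul (hu.1.mono fun _ hx => hx.1) (hv.1.mono fun _ hx => hx.1) ha hb]
      at this
  · rw [lintegral_add_measure, lintegral_smul_measure, lintegral_smul_measure, smul_eq_mul,
      smul_eq_mul]
    calc ENNReal.ofReal a * ∫⁻ z, edist z.1 z.2 ^ p ∂π₁ +
          ENNReal.ofReal b * ∫⁻ z, edist z.1 z.2 ^ p ∂π₂
        ≤ ENNReal.ofReal a * c + ENNReal.ofReal b * c := by gcongr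
      _ = c := by rw [← add_mul, hab', one_mul]

end DensityCouplings

theorem exists_le_transportCost_le {X : Type*} [PseudoEMetricSpace X] [MeasurableSpace X] {p : ℝ}
    {μ ν : Measure X} [IsFiniteMeasure μ] [IsFiniteMeasure ν] (hp : 0 ≤ p) {K L : Set X}
    (hKL : ediam (K ∪ L) ≠ ∞) (hK : μ Kᶜ = 0) (hL : ν Lᶜ = 0) {A : ℝ≥0∞}
    (h : ∀ ε ≠ 0, ∃ ν₁ ≤ ν, ∃ π, IsCoupling μ ν₁ π ∧ ∫⁻ z, edist z.1 z.2 ^ p ∂π ≤ A + ε) :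
    ∃ ν' ≤ ν, ν' univ = μ univ ∧ transportCost p μ ν' ≤ A := by
  set S : ℕ → Set (Lp ℝ 2 ν) := fun N => {u ∈ subDensities ν (μ univ).toReal |
    ∃ π, IsCoupling μ (ν.withDensity fun x => ENNReal.ofReal (u x)) π ∧
      ∫⁻ z, edist z.1 z.2 ^ p ∂π ≤ A + (N : ℝ≥0∞)⁻¹}
  have hS_ne : ∀ N, (S N).Nonempty := fun N => by
    obtain ⟨ν₁, hν₁, π, hπ, hcost⟩ := h _ (ENNReal.inv_ne_zero.mpr (ENNReal.natCast_ne_top N))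
    obtain ⟨u, hu, hdens⟩ := exists_mem_subDensities_withDensity_eq hν₁
    rw [← hπ.measure_univ_eq_right, hπ.measure_univ_eq_left] at hu
    exact ⟨u, hu, π, hdens ▸ hπ, hcost⟩
  have hS_anti : Antitone fun N => closure (S N) := fun M N hMN =>
    closure_mono fun u ⟨hu, π, hπ, hc⟩ => ⟨hu, π, hπ, hc.trans (by gcongr)⟩
  obtain ⟨u, hu⟩ := nonempty_iInter_of_antitone_of_convex hS_anti (fun N => (hS_ne N).closure)
    (fun _ => isClosed_closure)
    (fun _ => (convex_subDensities_exists_isCoupling_lintegral_le _).closure)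
    (isBounded_subDensities.subset (closure_minimal (sep_subset _ _) isClosed_subDensities))
  have hu_mem : ∀ N : ℕ, u ∈ subDensities ν (μ univ).toReal ∧
      transportCost p μ (ν.withDensity fun x => ENNReal.ofReal (u x)) ≤ A + (N : ℝ≥0∞)⁻¹ :=
    fun N => closure_subset_sep_of_le_add_edist isClosed_subDensities (sep_subset _ _)
      (ENNReal.mul_ne_top (ENNReal.rpow_ne_top_of_nonneg hp hKL)
        (ENNReal.rpow_ne_top_of_nonneg (by norm_num) (measure_ne_top ν _)))
      (fun _ hu _ hv => transportCost_withDensity_le_add_edist hp hK hL hu hv)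
      (by rintro v ⟨-, π, hπ, hc⟩; exact (transportCost_le hπ).trans hc) (mem_iInter.mp hu N)
  refine ⟨_, withDensity_ofReal_le_of_mem_subDensities (hu_mem 0).1, ?_,
    ge_of_tendsto' (x := atTop) ?_ fun N => (hu_mem N).2⟩
  · rw [withDensity_ofReal_univ_of_mem_subDensities (hu_mem 0).1,
      ENNReal.ofReal_toReal (measure_ne_top μ _)]
  · simpa using tendsto_const_nhds.add ENNReal.tendsto_inv_nat_nhds_zero

theorem monotony_general
    {X : Type*} [MetricSpace X] [MeasurableSpace X]
    (p : ℝ) (hp : 1 ≤ p)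
    (μ ν : Measure X) [IsFiniteMeasure μ] [IsFiniteMeasure ν]
    (hμc : ∃ K : Set X, IsCompact K ∧ μ Kᶜ = 0)
    (hνc : ∃ K : Set X, IsCompact K ∧ ν Kᶜ = 0)
    (hmass : μ Set.univ = ν Set.univ)
    (μ' : Measure X) (hμ' : μ' ≤ μ) :
    ∃ ν' : Measure X, ν' ≤ ν ∧ ν' Set.univ = μ' Set.univ ∧ Wp p μ' ν' ≤ Wp p μ ν := by
  obtain ⟨K, hK, hμK⟩ := hμc
  obtain ⟨L, hL, hνL⟩ := hνc
  have := isFiniteMeasure_of_le μ hμ'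
  have hp₀ : 0 < p := zero_lt_one.trans_le hp
  obtain ⟨ν', hν', hmass', hcost⟩ := exists_le_transportCost_le (A := transportCost p μ ν)
    hp₀.le (hK.union hL).isBounded.ediam_ne_top (Measure.absolutelyContinuous_of_le hμ' hμK) hνL
    fun ε hε => by
      obtain ⟨π, hπ, hcost⟩ := exists_isCoupling_lintegral_le hmass hε
      obtain ⟨π', hπ', ν₁, hν₁, hπ'c⟩ := hπ.exists_le_of_le_left hμ'
      exact ⟨ν₁, hν₁, π', hπ'c, (lintegral_mono' hπ' le_rfl).trans hcost⟩
  refine ⟨ν', hν', hmass', ?_⟩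
  rw [Wp_eq_transportCost_rpow hp₀, Wp_eq_transportCost_rpow hp₀]
  gcongr

theorem monotony
    {X : Type*} [MetricSpace X] [MeasurableSpace X] [BorelSpace X]
    (p : ℝ) (hp : 1 ≤ p)
    (μ ν : Measure X) [IsFiniteMeasure μ] [IsFiniteMeasure ν]
    (hμc : ∃ K : Set X, IsCompact K ∧ μ Kᶜ = 0)
    (hνc : ∃ K : Set X, IsCompact K ∧ ν Kᶜ = 0)
    (hmass : μ Set.univ = ν Set.univ)
    (μ' : Measure X) (hμ' : μ' ≤ μ) :
    ∃ ν' : Measure X, ν' ≤ ν ∧ ν' Set.univ = μ' Set.univ ∧ Wp p μ' ν' ≤ Wp p μ ν :=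
  monotony_general p hp μ ν hμc hνc hmass μ' hμ'
end
end

section
/- For every d ≥ 1 and p ∈ [1,∞) there is a real number θ(d,p) > 0 such that N^{1/d} · W_p(□^d, Δ_N) converges to θ(d,p) as N → ∞, where □^d is the uniform (normalized Lebesgue) probability measure on the unit cube [0,1]^d ⊂ ℝ^d. -/
open MeasureTheory Metric Filter
open scoped ENNReal

noncomputable section

/-- The uniform (normalized Lebesgue) probability measure on the unit cube `[0,1]^d ⊂ ℝ^d`. -/
def cubeMeasure (d : ℕ) : Measure (EuclideanSpace ℝ (Fin d)) :=
  volume.restrict {x : EuclideanSpace ℝ (Fin d) | ∀ i, x i ∈ Set.Icc (0 : ℝ) 1}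

/-!
The cube is the union of `m ^ d` copies of itself scaled by `1 / m`. Transporting an `N`-point
approximation into every copy gives an `m ^ d * N`-point approximation at `1 / m` of the
cost, so `W (m ^ d * N) ≤ W N / m`. Since `W` is also antitone in `N`, comparing `N` with
`m ^ d * N₀` for `m = ⌊(N / N₀) ^ (1 / d)⌋` shows that `N ^ (1 / d) * W N` converges to its
infimum. The infimum is positive: `N` balls of radius `δ ≍ N ^ (-1 / d)` carry at most half of the
cube's mass, so at least half of the mass has to move by at least `δ`.
-/

open Set
open scoped NNReal

section Coupling

variable {X Y : Type*} [MeasurableSpace X] [MeasurableSpace Y]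

theorem IsCoupling.map {μ ν : Measure X} {π : Measure (X × X)} {f : X → Y} (hf : Measurable f)
    (hπ : IsCoupling μ ν π) : IsCoupling (μ.map f) (ν.map f) (π.map (Prod.map f f)) := by
  have hF : Measurable (Prod.map f f) := hf.prodMap hf
  constructor
  · rw [Measure.map_map measurable_fst hF, ← hπ.1, Measure.map_map hf measurable_fst]
    rfl
  · rw [Measure.map_map measurable_snd hF, ← hπ.2, Measure.map_map hf measurable_snd]
    rfl

theorem IsCoupling.finset_sum_smul {ι : Type*} (s : Finset ι) (c : ι → ℝ≥0∞)
    {μ ν : ι → Measure X} {π : ι → Measure (X × X)} (hπ : ∀ i ∈ s, IsCoupling (μ i) (ν i) (π i)) :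
    IsCoupling (∑ i ∈ s, c i • μ i) (∑ i ∈ s, c i • ν i) (∑ i ∈ s, c i • π i) := by
  constructor
  · rw [Measure.map_finset_sum measurable_fst.aemeasurable]
    exact Finset.sum_congr rfl fun i hi => by rw [Measure.map_smul, (hπ i hi).1]
  · rw [Measure.map_finset_sum measurable_snd.aemeasurable]
    exact Finset.sum_congr rfl fun i hi => by rw [Measure.map_smul, (hπ i hi).2]

theorem FinSupported.map [MeasurableSingletonClass Y] {ν : Measure X} {N : ℕ} {f : X → Y}
    (hf : Measurable f) (hν : FinSupported N ν) : FinSupported N (ν.map f) := by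
  classical
  obtain ⟨S, hS, hSν⟩ := hν
  refine ⟨S.image f, Finset.card_image_le.trans hS, ?_⟩
  rw [Measure.map_apply hf (S.image f).finite_toSet.measurableSet.compl]
  refine measure_mono_null ?_ hSν
  exact fun x hx hxS => hx (Finset.mem_coe.2 (Finset.mem_image_of_mem f hxS))

theorem FinSupported.finset_sum_smul {ι : Type*} (s : Finset ι) (c : ι → ℝ≥0∞) {n : ι → ℕ}
    {ν : ι → Measure X} (hν : ∀ i ∈ s, FinSupported (n i) (ν i)) :
    FinSupported (∑ i ∈ s, n i) (∑ i ∈ s, c i • ν i) := by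
  classical
  choose! S hS hSν using hν
  refine ⟨s.biUnion S, Finset.card_biUnion_le.trans (Finset.sum_le_sum hS), ?_⟩
  rw [Measure.coe_finsetSum, Finset.sum_apply]
  refine Finset.sum_eq_zero fun i hi => ?_
  rw [Measure.smul_apply, smul_eq_mul]
  refine mul_eq_zero_of_right _ (measure_mono_null (compl_subset_compl.2 ?_) (hSν i hi))
  exact_mod_cast Finset.subset_biUnion_of_mem S hi

end Coupling

section Wasserstein

variable {X : Type*} [PseudoMetricSpace X] [MeasurableSpace X] {p : ℝ} {μ ν : Measure X}
  {π : Measure (X × X)}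

theorem WpDelta_le_of_isCoupling {N : ℕ} (hν : FinSupported N ν) (hmass : ν univ = μ univ)
    (hπ : IsCoupling μ ν π) :
    WpDelta p μ N ≤ (∫⁻ z, edist z.1 z.2 ^ p ∂π) ^ (1 / p) :=
  (iInf₂_le ν ⟨hν, hmass⟩).trans (iInf₂_le π hπ)

theorem le_WpDelta_iff {N : ℕ} {c : ℝ≥0∞} :
    c ≤ WpDelta p μ N ↔ ∀ (ν : Measure X) (π : Measure (X × X)), FinSupported N ν →
      ν univ = μ univ → IsCoupling μ ν π → c ≤ (∫⁻ z, edist z.1 z.2 ^ p ∂π) ^ (1 / p) := by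
  simp only [WpDelta, Wp, le_iInf_iff, and_imp]
  exact ⟨fun h ν π hν hm hπ => h ν hν hm π hπ, fun h ν hν hm π hπ => h ν π hν hm hπ⟩

theorem lintegral_edist_rpow_map_le (hp : 0 ≤ p) {K : ℝ≥0} {f : X → X} (hf : LipschitzWith K f)
    (π : Measure (X × X)) :
    ∫⁻ z, edist z.1 z.2 ^ p ∂(π.map (Prod.map f f)) ≤
      (K : ℝ≥0∞) ^ p * ∫⁻ z, edist z.1 z.2 ^ p ∂π := by
  rw [← lintegral_const_mul' _ _ (ENNReal.rpow_ne_top_of_nonneg hp ENNReal.coe_ne_top)]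
  refine (lintegral_map_le _ _).trans (lintegral_mono fun z => ?_)
  rw [← ENNReal.mul_rpow_of_nonneg _ _ hp]
  exact ENNReal.rpow_le_rpow (hf z.1 z.2) hp

theorem WpDelta_antitone (p : ℝ) (μ : Measure X) : Antitone (WpDelta p μ) := by
  intro N M hNM
  refine le_WpDelta_iff.2 fun ν π ⟨S, hS, hSν⟩ hmass hπ => ?_
  exact WpDelta_le_of_isCoupling ⟨S, hS.trans hNM, hSν⟩ hmass hπ

theorem WpDelta_one_le_of_ae_edist_le [MeasurableSingletonClass X] [IsProbabilityMeasure μ]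
    (hp : 0 < p) (x₀ : X) {R : ℝ≥0∞} (hR : ∀ᵐ x ∂μ, edist x x₀ ≤ R) : WpDelta p μ 1 ≤ R := by
  have hf : Measurable fun x : X => (x, x₀) := measurable_id.prodMk measurable_const
  have hπ : IsCoupling μ (Measure.dirac x₀) (μ.map fun x => (x, x₀)) := by
    constructor
    · rw [Measure.map_map measurable_fst hf]
      exact Measure.map_id
    · rw [Measure.map_map measurable_snd hf]
      simp [Function.comp_def, Measure.map_const]
  have hν : FinSupported 1 (Measure.dirac x₀) := ⟨{x₀}, by simp, by simp⟩
  calc WpDelta p μ 1 ≤ (∫⁻ z, edist z.1 z.2 ^ p ∂(μ.map fun x => (x, x₀))) ^ (1 / p) :=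
        WpDelta_le_of_isCoupling hν (by simp) hπ
    _ ≤ (∫⁻ _, R ^ p ∂μ) ^ (1 / p) := by
        gcongr
        refine (lintegral_map_le _ _).trans (lintegral_mono_ae ?_)
        filter_upwards [hR] with x hx using ENNReal.rpow_le_rpow hx hp.le
    _ = R := by
        rw [lintegral_const, measure_univ, mul_one, ← ENNReal.rpow_mul,
          mul_one_div_cancel hp.ne', ENNReal.rpow_one]

end Wasserstein

section SelfSimilar

variable {X : Type*} [PseudoMetricSpace X] [MeasurableSpace X] [BorelSpace X]
  [MeasurableSingletonClass X] {p : ℝ} {μ : Measure X} {ι : Type*} [Fintype ι] {w : ι → ℝ≥0∞}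
  {T : ι → X → X} {K : ℝ≥0}

theorem WpDelta_card_mul_le_of_isCoupling (hp : 0 < p) (hw : ∑ i, w i = 1)
    (hT : ∀ i, LipschitzWith K (T i)) (hμ : μ = ∑ i, w i • μ.map (T i)) {N : ℕ} {ν : Measure X}
    {π : Measure (X × X)} (hν : FinSupported N ν) (hmass : ν univ = μ univ)
    (hπ : IsCoupling μ ν π) :
    WpDelta p μ (Fintype.card ι * N) ≤ K * (∫⁻ z, edist z.1 z.2 ^ p ∂π) ^ (1 / p) := by
  have hTm : ∀ i, Measurable (T i) := fun i => (hT i).continuous.measurable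
  have hν' : FinSupported (Fintype.card ι * N) (∑ i, w i • ν.map (T i)) := by
    simpa using FinSupported.finset_sum_smul Finset.univ w fun i _ => hν.map (hTm i)
  have hmass' : (∑ i, w i • ν.map (T i)) univ = μ univ := by
    simp [Measure.map_apply (hTm _) MeasurableSet.univ, hmass, ← Finset.sum_mul, hw]
  have hπ' : IsCoupling μ (∑ i, w i • ν.map (T i)) (∑ i, w i • π.map (Prod.map (T i) (T i))) := by
    have h := IsCoupling.finset_sum_smul Finset.univ w fun i _ => hπ.map (hTm i)
    rwa [← hμ] at h
  have hcost : ∫⁻ z, edist z.1 z.2 ^ p ∂(∑ i, w i • π.map (Prod.map (T i) (T i))) ≤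
      (K : ℝ≥0∞) ^ p * ∫⁻ z, edist z.1 z.2 ^ p ∂π := by
    rw [lintegral_finsetSum_measure]
    calc ∑ i, ∫⁻ z, edist z.1 z.2 ^ p ∂(w i • π.map (Prod.map (T i) (T i)))
        ≤ ∑ i, w i * ((K : ℝ≥0∞) ^ p * ∫⁻ z, edist z.1 z.2 ^ p ∂π) := by
          gcongr with i
          rw [lintegral_smul_measure, smul_eq_mul]
          gcongr
          exact lintegral_edist_rpow_map_le hp.le (hT i) π
      _ = (K : ℝ≥0∞) ^ p * ∫⁻ z, edist z.1 z.2 ^ p ∂π := by rw [← Finset.sum_mul, hw, one_mul]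
  calc WpDelta p μ (Fintype.card ι * N)
      ≤ (∫⁻ z, edist z.1 z.2 ^ p ∂(∑ i, w i • π.map (Prod.map (T i) (T i)))) ^ (1 / p) :=
        WpDelta_le_of_isCoupling hν' hmass' hπ'
    _ ≤ ((K : ℝ≥0∞) ^ p * ∫⁻ z, edist z.1 z.2 ^ p ∂π) ^ (1 / p) := by gcongr
    _ = K * (∫⁻ z, edist z.1 z.2 ^ p ∂π) ^ (1 / p) := by
        rw [ENNReal.mul_rpow_of_nonneg _ _ (by positivity), ← ENNReal.rpow_mul,
          mul_one_div_cancel hp.ne', ENNReal.rpow_one]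

theorem WpDelta_card_mul_le (hp : 0 < p) (hw : ∑ i, w i = 1) (hK : K ≠ 0)
    (hT : ∀ i, LipschitzWith K (T i)) (hμ : μ = ∑ i, w i • μ.map (T i)) (N : ℕ) :
    WpDelta p μ (Fintype.card ι * N) ≤ K * WpDelta p μ N := by
  have hK' : (K : ℝ≥0∞) ≠ 0 := ENNReal.coe_ne_zero.2 hK
  simp only [WpDelta, Wp, ENNReal.mul_iInf_of_ne hK' ENNReal.coe_ne_top]
  refine le_iInf₂ fun ν hν => le_iInf₂ fun π hπ => ?_
  exact WpDelta_card_mul_le_of_isCoupling hp hw hT hμ hν.1 hν.2 hπ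

end SelfSimilar

section LowerBound

variable {X : Type*} [PseudoMetricSpace X] [MeasurableSpace X] [OpensMeasurableSpace X] {p : ℝ}
  {μ ν : Measure X} {π : Measure (X × X)}

theorem IsCoupling.rpow_mul_measure_compl_thickening_le (hπ : IsCoupling μ ν π) {S : Set X}
    (hS : ν Sᶜ = 0) (δ : ℝ) (hp : 0 ≤ p) :
    ENNReal.ofReal δ ^ p * μ (thickening δ S)ᶜ ≤ ∫⁻ z, edist z.1 z.2 ^ p ∂π := by
  have hU : MeasurableSet (thickening δ S)ᶜ := isOpen_thickening.measurableSet.compl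
  have hS' : ∀ᵐ z ∂π, z.2 ∈ S := by
    refine ae_of_ae_map measurable_snd.aemeasurable ?_
    rw [hπ.2]
    exact ae_iff.2 hS
  rw [← hπ.1, Measure.map_apply measurable_fst hU,
    ← lintegral_indicator_const (measurable_fst hU)]
  refine lintegral_mono_ae ?_
  filter_upwards [hS'] with z hz
  by_cases hz₁ : z ∈ Prod.fst ⁻¹' (thickening δ S)ᶜ
  · rw [indicator_of_mem hz₁]
    refine ENNReal.rpow_le_rpow ?_ hp
    exact (not_lt.1 (mt mem_thickening_iff_infEDist_lt.2 hz₁)).trans (infEDist_le_edist_of_mem hz)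
  · rw [indicator_of_notMem hz₁]
    exact zero_le

theorem le_WpDelta_of_le_measure_compl_thickening (hp : 0 < p) {N : ℕ} {δ : ℝ} {η : ℝ≥0∞}
    (h : ∀ S : Finset X, S.card ≤ N → η ≤ μ (thickening δ S)ᶜ) :
    ENNReal.ofReal δ * η ^ (1 / p) ≤ WpDelta p μ N := by
  refine le_WpDelta_iff.2 fun ν π ⟨S, hS, hSν⟩ _ hπ => ?_
  calc ENNReal.ofReal δ * η ^ (1 / p) = (ENNReal.ofReal δ ^ p * η) ^ (1 / p) := by
        rw [ENNReal.mul_rpow_of_nonneg _ _ (by positivity), ← ENNReal.rpow_mul,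
          mul_one_div_cancel hp.ne', ENNReal.rpow_one]
    _ ≤ (∫⁻ z, edist z.1 z.2 ^ p ∂π) ^ (1 / p) := by
        gcongr
        exact (mul_le_mul_right (h S hS) _).trans
          (hπ.rpow_mul_measure_compl_thickening_le hSν δ hp.le)

end LowerBound

theorem MeasureTheory.Measure.addHaar_thickening_finset_le {E : Type*} [NormedAddCommGroup E]
    [NormedSpace ℝ E] [MeasurableSpace E] [BorelSpace E] [FiniteDimensional ℝ E] [Nontrivial E]
    (μ : Measure E) [μ.IsAddHaarMeasure] (S : Finset E) {δ : ℝ} (hδ : 0 ≤ δ) :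
    μ (thickening δ (S : Set E)) ≤
      S.card * (ENNReal.ofReal (δ ^ Module.finrank ℝ E) * μ (ball 0 1)) := by
  rw [thickening_eq_biUnion_ball, Finset.set_biUnion_coe]
  refine (measure_biUnion_finset_le S _).trans_eq ?_
  simp [Measure.addHaar_ball _ _ hδ]

section Scaling

variable {d : ℕ} {a : ℕ → ℝ}

theorem rpow_mul_le_of_scaling (hd : d ≠ 0) (hanti : ∀ ⦃N M : ℕ⦄, 0 < N → N ≤ M → a M ≤ a N)
    (hscale : ∀ m N : ℕ, 0 < m → 0 < N → a (m ^ d * N) ≤ a N / m) {N₀ N : ℕ} (hN₀ : 0 < N₀)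
    (hN : N₀ ≤ N) :
    (N : ℝ) ^ (1 / (d : ℝ)) * a N ≤
      ((N / N₀ : ℝ) ^ (1 / (d : ℝ)) / ⌊(N / N₀ : ℝ) ^ (1 / (d : ℝ))⌋₊) *
        ((N₀ : ℝ) ^ (1 / (d : ℝ)) * a N₀) := by
  set x := (N / N₀ : ℝ) ^ (1 / (d : ℝ)) with hx_def
  have hN₀' : (0 : ℝ) < N₀ := by exact_mod_cast hN₀
  have hx : 1 ≤ x :=
    Real.one_le_rpow ((one_le_div hN₀').2 (by exact_mod_cast hN)) (by positivity)
  set m := ⌊x⌋₊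
  have hm : 0 < m := Nat.floor_pos.2 hx
  have hmN : m ^ d * N₀ ≤ N := by
    have hxd : x ^ d = N / N₀ := by
      rw [hx_def, one_div, Real.rpow_inv_natCast_pow (by positivity) hd]
    have hmx : (m : ℝ) ^ d ≤ x ^ d :=
      pow_le_pow_left₀ (by positivity) (Nat.floor_le (by linarith)) d
    rw [hxd, le_div_iff₀ hN₀'] at hmx
    exact_mod_cast hmx
  have haN : a N ≤ a N₀ / m :=
    (hanti (by positivity) hmN).trans (hscale m N₀ hm hN₀)
  have hsplit : (N : ℝ) ^ (1 / (d : ℝ)) = x * (N₀ : ℝ) ^ (1 / (d : ℝ)) := by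
    rw [hx_def, Real.div_rpow (by positivity) hN₀'.le, div_mul_cancel₀ _ (by positivity)]
  calc (N : ℝ) ^ (1 / (d : ℝ)) * a N ≤ (N : ℝ) ^ (1 / (d : ℝ)) * (a N₀ / m) := by gcongr
    _ = x / m * ((N₀ : ℝ) ^ (1 / (d : ℝ)) * a N₀) := by rw [hsplit]; ring

theorem tendsto_rpow_mul_of_scaling (hd : d ≠ 0) (ha : ∀ N, 0 ≤ a N)
    (hanti : ∀ ⦃N M : ℕ⦄, 0 < N → N ≤ M → a M ≤ a N)
    (hscale : ∀ m N : ℕ, 0 < m → 0 < N → a (m ^ d * N) ≤ a N / m) :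
    ∃ θ, Tendsto (fun N : ℕ => (N : ℝ) ^ (1 / (d : ℝ)) * a N) atTop (nhds θ) := by
  set g := fun N : ℕ => (N : ℝ) ^ (1 / (d : ℝ)) * a N
  have hbdd : BddBelow (range fun n : ℕ => g (n + 1)) :=
    ⟨0, by rintro _ ⟨n, rfl⟩; exact mul_nonneg (by positivity) (ha _)⟩
  refine ⟨⨅ n : ℕ, g (n + 1), tendsto_order.2 ⟨fun b hb => ?_, fun b hb => ?_⟩⟩
  · filter_upwards [eventually_ge_atTop 1] with N hN
    obtain ⟨n, rfl⟩ := Nat.exists_eq_add_of_le' hN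
    exact hb.trans_le (ciInf_le hbdd n)
  · obtain ⟨n, hn⟩ := exists_lt_of_ciInf_lt hb
    set x := fun N : ℕ => (N / (n + 1 : ℕ) : ℝ) ^ (1 / (d : ℝ))
    have hx : Tendsto x atTop atTop :=
      (tendsto_rpow_atTop (by positivity)).comp
        (tendsto_natCast_atTop_atTop.atTop_div_const (by positivity))
    have hratio : Tendsto (fun N => x N / ⌊x N⌋₊ * g (n + 1)) atTop (nhds (g (n + 1))) := by
      have h := ((tendsto_nat_floor_div_atTop.comp hx).inv₀ one_ne_zero).mul_const (g (n + 1))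
      simpa only [Function.comp_def, inv_div, inv_one, one_mul] using h
    filter_upwards [hratio.eventually (gt_mem_nhds hn), eventually_ge_atTop (n + 1)] with N h₁ h₂
    exact (rpow_mul_le_of_scaling hd hanti hscale n.succ_pos h₂).trans_lt h₁

end Scaling

section Cube

variable {d m : ℕ}

/- The half-open subcubes tile the half-open cube exactly, and the half-open cube differs from the
closed one by a null set. -/
def unitCubeIco (d : ℕ) : Set (EuclideanSpace ℝ (Fin d)) := {x | ∀ i, x i ∈ Ico (0 : ℝ) 1}

def subcubeMap (m : ℕ) (k : Fin d → Fin m) (x : EuclideanSpace ℝ (Fin d)) :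
    EuclideanSpace ℝ (Fin d) :=
  (m : ℝ)⁻¹ • (x + WithLp.toLp 2 fun i => (k i : ℝ))

def subcubeIco (m : ℕ) (k : Fin d → Fin m) : Set (EuclideanSpace ℝ (Fin d)) :=
  {y | ∀ i, m * y i ∈ Ico (k i : ℝ) (k i + 1)}

theorem EuclideanSpace.setOf_forall_mem_eq_preimage {ι : Type*} [Fintype ι] (s : ι → Set ℝ) :
    {x : EuclideanSpace ℝ ι | ∀ i, x i ∈ s i} =
      (MeasurableEquiv.toLp 2 (ι → ℝ)).symm ⁻¹' univ.pi s := by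
  ext x
  simp

theorem unitCubeIco_ae_eq :
    unitCubeIco d =ᵐ[volume] {x : EuclideanSpace ℝ (Fin d) | ∀ i, x i ∈ Icc (0 : ℝ) 1} := by
  rw [unitCubeIco, EuclideanSpace.setOf_forall_mem_eq_preimage,
    EuclideanSpace.setOf_forall_mem_eq_preimage]
  exact (EuclideanSpace.volume_preserving_symm_measurableEquiv_toLp (Fin d)).quasiMeasurePreserving
    |>.preimage_ae_eq Measure.pi_Ico_ae_eq_pi_Icc

theorem cubeMeasure_eq_restrict_unitCubeIco : cubeMeasure d = volume.restrict (unitCubeIco d) :=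
  Measure.restrict_congr_set unitCubeIco_ae_eq.symm

theorem cubeMeasure_le_volume : cubeMeasure d ≤ volume :=
  Measure.restrict_le_self

instance : IsProbabilityMeasure (cubeMeasure d) := by
  constructor
  rw [cubeMeasure, Measure.restrict_apply_univ, EuclideanSpace.setOf_forall_mem_eq_preimage,
    (EuclideanSpace.volume_preserving_symm_measurableEquiv_toLp (Fin d)).measure_preimage
      (by measurability), volume_pi_pi]
  simp

theorem subcubeMap_apply (k : Fin d → Fin m) (x : EuclideanSpace ℝ (Fin d)) (i : Fin d) :
    subcubeMap m k x i = (m : ℝ)⁻¹ * (x i + k i) := rfl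

theorem lipschitzWith_subcubeMap (k : Fin d → Fin m) :
    LipschitzWith ‖(m : ℝ)⁻¹‖₊ (subcubeMap m k) := by
  have h := (lipschitzWith_smul (m : ℝ)⁻¹).comp (isometry_add_right
    (WithLp.toLp 2 fun i => (k i : ℝ) : EuclideanSpace ℝ (Fin d))).lipschitz
  rw [mul_one] at h
  exact h

theorem measurable_subcubeMap (k : Fin d → Fin m) : Measurable (subcubeMap m k) :=
  (lipschitzWith_subcubeMap k).continuous.measurable

theorem measurableSet_subcubeIco (k : Fin d → Fin m) : MeasurableSet (subcubeIco m k) := by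
  simp only [subcubeIco, ofPred_forall]
  exact MeasurableSet.iInter fun i => measurableSet_Ico.preimage (by fun_prop)

theorem map_volume_subcubeMap (hm : m ≠ 0) (k : Fin d → Fin m) :
    volume.map (subcubeMap m k) = ((m : ℝ≥0∞) ^ d) • volume := by
  have hcomp : subcubeMap m k =
      (fun x => (m : ℝ)⁻¹ • x) ∘ fun x => x + WithLp.toLp 2 fun i => (k i : ℝ) := rfl
  rw [hcomp, ← Measure.map_map (measurable_const_smul _) (measurable_add_const _),
    map_add_right_eq_self, Measure.map_addHaar_smul _ (by positivity), finrank_euclideanSpace_fin]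
  simp

theorem preimage_subcubeMap_subcubeIco (hm : m ≠ 0) (k : Fin d → Fin m) :
    subcubeMap m k ⁻¹' subcubeIco m k = unitCubeIco d := by
  ext x
  simp [subcubeIco, unitCubeIco, subcubeMap_apply, hm, add_comm _ (1 : ℝ)]

theorem pairwise_disjoint_subcubeIco :
    Pairwise (Function.onFun Disjoint (subcubeIco (d := d) m)) := by
  refine fun k k' hkk' => disjoint_left.2 fun y hy hy' => hkk' (funext fun i => Fin.ext ?_)
  rw [← Nat.floor_eq_on_Ico _ _ (hy i), ← Nat.floor_eq_on_Ico _ _ (hy' i)]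

theorem iUnion_subcubeIco (hm : m ≠ 0) : ⋃ k, subcubeIco (d := d) m k = unitCubeIco d := by
  have hm' : (0 : ℝ) < m := by positivity
  ext y
  simp only [mem_iUnion, subcubeIco, unitCubeIco, mem_ofPred_eq, mem_Ico]
  constructor
  · rintro ⟨k, hk⟩ i
    have hki : ((k i : ℕ) : ℝ) + 1 ≤ m := by exact_mod_cast (k i).isLt
    constructor
    · exact nonneg_of_mul_nonneg_right ((Nat.cast_nonneg _).trans (hk i).1) hm'
    · exact (mul_lt_iff_lt_one_right hm').1 ((hk i).2.trans_le hki)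
  · intro hy
    have hy₀ : ∀ i, 0 ≤ (m : ℝ) * y i := fun i => mul_nonneg hm'.le (hy i).1
    refine ⟨fun i => ⟨⌊(m : ℝ) * y i⌋₊, (Nat.floor_lt (hy₀ i)).2 ?_⟩, fun i =>
      ⟨Nat.floor_le (hy₀ i), Nat.lt_floor_add_one _⟩⟩
    exact (mul_lt_iff_lt_one_right hm').2 (hy i).2

theorem cubeMeasure_eq_sum_map (hm : m ≠ 0) :
    cubeMeasure d =
      ∑ k : Fin d → Fin m, ((m : ℝ≥0∞) ^ d)⁻¹ • (cubeMeasure d).map (subcubeMap m k) := by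
  have hmd : (m : ℝ≥0∞) ^ d ≠ 0 := pow_ne_zero _ (by exact_mod_cast hm)
  have hmd' : (m : ℝ≥0∞) ^ d ≠ ⊤ := ENNReal.pow_ne_top (ENNReal.natCast_ne_top m)
  have hpiece : ∀ k : Fin d → Fin m,
      (cubeMeasure d).map (subcubeMap m k) =
        ((m : ℝ≥0∞) ^ d) • volume.restrict (subcubeIco m k) := by
    intro k
    rw [cubeMeasure_eq_restrict_unitCubeIco, ← preimage_subcubeMap_subcubeIco hm k,
      ← Measure.restrict_map (measurable_subcubeMap k) (measurableSet_subcubeIco k),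
      map_volume_subcubeMap hm, Measure.restrict_smul]
  simp only [hpiece, smul_smul, ENNReal.inv_mul_cancel hmd hmd', one_smul]
  rw [← Measure.sum_fintype, ← Measure.restrict_iUnion pairwise_disjoint_subcubeIco
    measurableSet_subcubeIco, iUnion_subcubeIco hm, cubeMeasure_eq_restrict_unitCubeIco]

end Cube

section CubeWasserstein

variable {d m : ℕ} {p : ℝ}

theorem WpDelta_cubeMeasure_pow_mul_le (hp : 0 < p) (hm : m ≠ 0) (N : ℕ) :
    WpDelta p (cubeMeasure d) (m ^ d * N) ≤ (m : ℝ≥0∞)⁻¹ * WpDelta p (cubeMeasure d) N := by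
  have hw : ∑ _k : Fin d → Fin m, ((m : ℝ≥0∞) ^ d)⁻¹ = 1 := by
    simp [ENNReal.mul_inv_cancel (pow_ne_zero _ (Nat.cast_ne_zero.2 hm))
      (ENNReal.pow_ne_top (ENNReal.natCast_ne_top m))]
  have h := WpDelta_card_mul_le hp hw (by simpa using hm) (fun k => lipschitzWith_subcubeMap k)
    (cubeMeasure_eq_sum_map hm) N
  have hm' : (m : ℝ≥0) ≠ 0 := by exact_mod_cast hm
  simpa [ENNReal.coe_inv hm'] using h

theorem WpDelta_cubeMeasure_one_le (hp : 0 < p) :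
    WpDelta p (cubeMeasure d) 1 ≤ ENNReal.ofReal √d := by
  refine WpDelta_one_le_of_ae_edist_le hp 0 (ae_restrict_of_forall_mem ?_ fun x hx => ?_)
  · rw [EuclideanSpace.setOf_forall_mem_eq_preimage]
    exact (MeasurableEquiv.measurableSet_preimage _).2 (by measurability)
  · rw [edist_dist, dist_zero_right]
    refine ENNReal.ofReal_le_ofReal ?_
    rw [EuclideanSpace.norm_eq]
    refine Real.sqrt_le_sqrt ((Finset.sum_le_sum (g := fun _ => (1 : ℝ)) fun i _ => ?_).trans_eq
      (by simp))
    rw [Real.norm_of_nonneg (hx i).1]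
    exact pow_le_one₀ (hx i).1 (hx i).2

theorem exists_le_WpDelta_cubeMeasure (hd : d ≠ 0) (hp : 0 < p) :
    ∃ c > 0, ∀ N : ℕ, 0 < N →
      ENNReal.ofReal (c / (N : ℝ) ^ (1 / (d : ℝ))) ≤ WpDelta p (cubeMeasure d) N := by
  have : Nontrivial (EuclideanSpace ℝ (Fin d)) :=
    Module.nontrivial_of_finrank_pos (R := ℝ) (by simpa using Nat.pos_of_ne_zero hd)
  obtain ⟨B, hB, hball⟩ : ∃ B : ℝ, 0 < B ∧
      volume (ball (0 : EuclideanSpace ℝ (Fin d)) 1) = ENNReal.ofReal B :=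
    ⟨_, ENNReal.toReal_pos (measure_ball_pos _ _ one_pos).ne' measure_ball_lt_top.ne,
      (ENNReal.ofReal_toReal measure_ball_lt_top.ne).symm⟩
  refine ⟨(2 * B)⁻¹ ^ (1 / (d : ℝ)) * 2⁻¹ ^ (1 / p), by positivity, fun N hN => ?_⟩
  have hN' : (0 : ℝ) < N := by exact_mod_cast hN
  -- `N` balls of radius `δ` have total volume `1 / 2`.
  obtain ⟨δ, hδ_def⟩ : ∃ δ : ℝ, δ = ((2 * B)⁻¹ / N) ^ (1 / (d : ℝ)) := ⟨_, rfl⟩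
  have hδ₀ : 0 ≤ δ := hδ_def ▸ by positivity
  have hδ : δ ^ d = (2 * B)⁻¹ / N := by
    rw [hδ_def, one_div, Real.rpow_inv_natCast_pow (by positivity) hd]
  have hthick : ∀ S : Finset (EuclideanSpace ℝ (Fin d)), S.card ≤ N →
      2⁻¹ ≤ cubeMeasure d (thickening δ S)ᶜ := by
    intro S hS
    have hvol : cubeMeasure d (thickening δ S) ≤ 2⁻¹ := calc
      cubeMeasure d (thickening δ S)
          ≤ (volume : Measure (EuclideanSpace ℝ (Fin d))) (thickening δ S) :=
          Measure.le_iff'.1 cubeMeasure_le_volume _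
      _ ≤ S.card * (ENNReal.ofReal (δ ^ d) * ENNReal.ofReal B) := by
          simpa [hball] using Measure.addHaar_thickening_finset_le volume S hδ₀
      _ ≤ N * (ENNReal.ofReal (δ ^ d) * ENNReal.ofReal B) := by gcongr
      _ = 2⁻¹ := by
          rw [← ENNReal.ofReal_natCast, ← ENNReal.ofReal_mul (by positivity),
            ← ENNReal.ofReal_mul (by positivity), hδ,
            show (N : ℝ) * ((2 * B)⁻¹ / N * B) = 2⁻¹ by field_simp,
            ENNReal.ofReal_inv_of_pos two_pos, ENNReal.ofReal_ofNat]
    rw [prob_compl_eq_one_sub isOpen_thickening.measurableSet]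
    calc (2⁻¹ : ℝ≥0∞) = 1 - 2⁻¹ := ENNReal.one_sub_inv_two.symm
      _ ≤ 1 - cubeMeasure d (thickening δ S) := tsub_le_tsub_left hvol 1
  calc ENNReal.ofReal ((2 * B)⁻¹ ^ (1 / (d : ℝ)) * 2⁻¹ ^ (1 / p) / (N : ℝ) ^ (1 / (d : ℝ)))
      = ENNReal.ofReal δ * 2⁻¹ ^ (1 / p) := by
        rw [mul_div_right_comm, ← Real.div_rpow (by positivity) hN'.le, ← hδ_def,
          ENNReal.ofReal_mul hδ₀, ← ENNReal.ofReal_rpow_of_nonneg (by norm_num)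
          (by positivity), ENNReal.ofReal_inv_of_pos two_pos, ENNReal.ofReal_ofNat]
    _ ≤ WpDelta p (cubeMeasure d) N := le_WpDelta_of_le_measure_compl_thickening hp hthick

end CubeWasserstein

theorem cube_approximation_constant
    (d : ℕ) (hd : 1 ≤ d) (p : ℝ) (hp : 1 ≤ p) :
    ∃ θ : ℝ, 0 < θ ∧
      Tendsto (fun N : ℕ => (N : ℝ) ^ (1 / (d : ℝ)) * (WpDelta p (cubeMeasure d) N).toReal)
        atTop (nhds θ) := by
  have hp₀ : 0 < p := by linarith
  have hd₀ : d ≠ 0 := by omega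
  have hfin : ∀ N, 0 < N → WpDelta p (cubeMeasure d) N ≠ ⊤ := fun N hN =>
    ne_top_of_le_ne_top ENNReal.ofReal_ne_top
      ((WpDelta_antitone p _ hN).trans (WpDelta_cubeMeasure_one_le hp₀))
  have hscale : ∀ m N : ℕ, 0 < m → 0 < N → (WpDelta p (cubeMeasure d) (m ^ d * N)).toReal ≤
      (WpDelta p (cubeMeasure d) N).toReal / m := by
    intro m N hm hN
    have h := ENNReal.toReal_mono (ENNReal.mul_ne_top (by simpa using hm.ne') (hfin N hN))
      (WpDelta_cubeMeasure_pow_mul_le hp₀ hm.ne' N)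
    rwa [ENNReal.toReal_mul, ENNReal.toReal_inv, ENNReal.toReal_natCast, inv_mul_eq_div] at h
  obtain ⟨θ, hθ⟩ := tendsto_rpow_mul_of_scaling hd₀ (fun _ => ENNReal.toReal_nonneg)
    (fun N M hN hNM => ENNReal.toReal_mono (hfin N hN) (WpDelta_antitone p _ hNM)) hscale
  obtain ⟨c, hc, hlow⟩ := exists_le_WpDelta_cubeMeasure hd₀ hp₀
  refine ⟨θ, hc.trans_le (ge_of_tendsto hθ ?_), hθ⟩
  filter_upwards [eventually_gt_atTop 0] with N hN
  have h := (ENNReal.ofReal_le_iff_le_toReal (hfin N hN)).1 (hlow N hN)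
  rwa [div_le_iff₀' (by positivity)] at h
end
end

section
/- Let p ∈ [1,∞) and let □¹ be the uniform (Lebesgue) probability measure on [0,1] ⊂ ℝ. Then N · W_p(□¹, Δ_N) converges to (p+1)^{-1/p}/2 as N → ∞; that is, θ(1,p) = (p+1)^{-1/p}/2. -/
open MeasureTheory Metric Filter
open scoped ENNReal

noncomputable section

/-- The uniform (Lebesgue) probability measure on `[0,1] ⊂ ℝ`. -/
def unifInterval : Measure ℝ := volume.restrict (Set.Icc (0 : ℝ) 1)


/-!
For every `N ≥ 1` the distance is exactly `W_p(□¹, Δ_N) = (2N)⁻¹ (p + 1)^(-1/p)`.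

Upper bound: send each point of `[i/N, (i+1)/N)` to the midpoint of that cell; since
`|fract y - 1/2|^p` is `1`-periodic, the cost is `N^(-p) ∫₀¹ |y - 1/2|^p dy = (2N)^(-p) / (p + 1)`.

Lower bound: a plan onto a set `S` of at most `N` points costs at least `∫ d(x, S)^p dx`. By the
layer-cake formula this is `p ∫ t^(p-1) |{d(·, S) ≥ t}| dt`, and `|{d(·, S) < t}| ≤ 2Nt` because
that set is covered by `N` intervals of length `2t`; hence the cost is at least
`p ∫₀^(1/(2N)) t^(p-1) (1 - 2Nt) dt = (2N)^(-p) / (p + 1)`.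
-/

section Wasserstein

variable {X : Type*} [PseudoMetricSpace X] [MeasurableSpace X] {p : ℝ} {μ ν : Measure X} {N : ℕ}

lemma Wp_le_of_isCoupling {π : Measure (X × X)} (hπ : IsCoupling μ ν π) :
    Wp p μ ν ≤ (∫⁻ z, edist z.1 z.2 ^ p ∂π) ^ (1 / p) :=
  iInf₂_le π hπ

lemma WpDelta_le_Wp (hν : FinSupported N ν) (hmass : ν Set.univ = μ Set.univ) :
    WpDelta p μ N ≤ Wp p μ ν :=
  iInf₂_le ν ⟨hν, hmass⟩

lemma WpDelta_le_of_ae_mem [MeasurableSingletonClass X] (hp : 0 ≤ p) {q : X → X}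
    (hq : Measurable q) {S : Finset X} (hSN : S.card ≤ N) (hqS : ∀ᵐ x ∂μ, q x ∈ S) :
    WpDelta p μ N ≤ (∫⁻ x, edist x (q x) ^ p ∂μ) ^ (1 / p) := by
  have hπ : IsCoupling μ (μ.map q) (μ.map fun x => (x, q x)) := by
    constructor
    · rw [Measure.map_map (by fun_prop) (by fun_prop)]
      exact Measure.map_id
    · rw [Measure.map_map (by fun_prop) (by fun_prop)]
      rfl
  have hν : FinSupported N (μ.map q) :=
    ⟨S, hSN, by rwa [Measure.map_apply hq S.measurableSet.compl]⟩
  calc WpDelta p μ N ≤ Wp p μ (μ.map q) := WpDelta_le_Wp hν (Measure.map_apply hq .univ)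
    _ ≤ _ := Wp_le_of_isCoupling hπ
    _ ≤ _ := ENNReal.rpow_le_rpow (lintegral_map_le _ _) (by positivity)

variable [OpensMeasurableSpace X]

lemma lintegral_infDist_rpow_le_of_isCoupling (hp : 0 ≤ p) {S : Finset X}
    (hνS : ν (S : Set X)ᶜ = 0) {π : Measure (X × X)} (hπ : IsCoupling μ ν π) :
    ∫⁻ x, ENNReal.ofReal (infDist x S ^ p) ∂μ ≤ ∫⁻ z, edist z.1 z.2 ^ p ∂π := by
  have hS : ∀ᵐ z ∂π, z.2 ∈ (S : Set X) := by
    refine ae_iff.2 (nonpos_iff_eq_zero.1 ?_)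
    rw [← hνS, ← hπ.2]
    exact Measure.le_map_apply measurable_snd.aemeasurable _
  rw [← hπ.1, lintegral_map (by fun_prop) measurable_fst]
  refine lintegral_mono_ae (hS.mono fun z hz => ?_)
  rw [← ENNReal.ofReal_rpow_of_nonneg infDist_nonneg hp, edist_dist]
  exact ENNReal.rpow_le_rpow (ENNReal.ofReal_le_ofReal (infDist_le_dist_of_mem hz)) hp

lemma le_WpDelta (hp : 0 ≤ p) (hμ : μ ≠ 0) {c : ℝ≥0∞}
    (h : ∀ S : Finset X, S.Nonempty → S.card ≤ N →
      c ≤ ∫⁻ x, ENNReal.ofReal (infDist x S ^ p) ∂μ) :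
    c ^ (1 / p) ≤ WpDelta p μ N := by
  refine le_iInf₂ fun ν ⟨⟨S, hSN, hνS⟩, hmass⟩ => le_iInf₂ fun π hπ => ?_
  have hS : S.Nonempty := by
    rw [Finset.nonempty_iff_ne_empty]
    rintro rfl
    exact hμ (Measure.measure_univ_eq_zero.1 (by simpa [hmass] using hνS))
  exact ENNReal.rpow_le_rpow ((h S hS hSN).trans
    (lintegral_infDist_rpow_le_of_isCoupling hp hνS hπ)) (by positivity)

end Wasserstein

instance : IsProbabilityMeasure unifInterval :=
  ⟨by simp [unifInterval]⟩

lemma Real.volume_thickening_finset_le (S : Finset ℝ) (t : ℝ) :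
    volume (thickening t (S : Set ℝ)) ≤ S.card * ENNReal.ofReal (2 * t) := by
  rw [thickening_eq_biUnion_ball]
  refine (measure_biUnion_finset_le S _).trans ?_
  simp [Real.volume_ball]

lemma ofReal_one_sub_le_unifInterval_le_infDist {S : Finset ℝ} (hS : S.Nonempty) {t : ℝ}
    (ht : 0 ≤ t) :
    ENNReal.ofReal (1 - 2 * S.card * t) ≤ unifInterval {x | t ≤ infDist x S} := by
  have hcompl : {x | t ≤ infDist x S} = (thickening t (S : Set ℝ))ᶜ := by
    ext x
    simp [mem_thickening_iff_infDist_lt hS]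
  rw [hcompl, prob_compl_eq_one_sub isOpen_thickening.measurableSet,
    ENNReal.ofReal_sub _ (by positivity), ENNReal.ofReal_one]
  gcongr
  calc unifInterval (thickening t (S : Set ℝ)) ≤ volume (thickening t (S : Set ℝ)) :=
        Measure.restrict_apply_le _ _
    _ ≤ S.card * ENNReal.ofReal (2 * t) := Real.volume_thickening_finset_le S t
    _ = ENNReal.ofReal (2 * S.card * t) := by
        rw [← ENNReal.ofReal_natCast, ← ENNReal.ofReal_mul (by positivity)]
        ring_nf

lemma integral_one_sub_mul_mul_rpow {b p : ℝ} (hb : 0 < b) (hp : 0 < p) :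
    ∫ t in (0 : ℝ)..b⁻¹, (1 - b * t) * t ^ (p - 1) = b⁻¹ ^ p / (p * (p + 1)) := by
  have hexpand : ∀ t ∈ Set.uIcc (0 : ℝ) b⁻¹,
      (1 - b * t) * t ^ (p - 1) = t ^ (p - 1) - b * t ^ p := by
    intro t _
    rcases eq_or_ne t 0 with rfl | ht
    · simp [Real.zero_rpow hp.ne']
    · rw [Real.rpow_sub_one ht]
      field_simp
  have hint : ∀ r : ℝ, -1 < r → IntervalIntegrable (fun t : ℝ => t ^ r) volume 0 b⁻¹ := fun r hr =>
    intervalIntegral.intervalIntegrable_rpow' hr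
  rw [intervalIntegral.integral_congr hexpand, intervalIntegral.integral_sub (hint _ (by linarith))
    ((hint _ (by linarith)).const_mul b), intervalIntegral.integral_const_mul,
    integral_rpow (Or.inl (by linarith)), integral_rpow (Or.inl (by linarith)),
    sub_add_cancel, Real.zero_rpow hp.ne', Real.zero_rpow (by linarith),
    Real.rpow_add_one (by positivity)]
  field_simp
  ring

lemma le_lintegral_infDist_rpow_unifInterval {p : ℝ} (hp : 0 < p) {S : Finset ℝ}
    (hS : S.Nonempty) :
    ENNReal.ofReal ((2 * S.card : ℝ)⁻¹ ^ p / (p + 1)) ≤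
      ∫⁻ x, ENNReal.ofReal (infDist x S ^ p) ∂unifInterval := by
  set b : ℝ := 2 * S.card
  have hb : 0 < b := by have := hS.card_pos; positivity
  have hint : IntervalIntegrable (fun t : ℝ => (1 - b * t) * t ^ (p - 1)) volume 0 b⁻¹ :=
    (intervalIntegral.intervalIntegrable_rpow' (by linarith)).continuousOn_mul (by fun_prop)
  have hbt : ∀ t ∈ Set.Ioc 0 b⁻¹, 0 ≤ 1 - b * t := fun t ht => by
    nlinarith [mul_le_mul_of_nonneg_left ht.2 hb.le, mul_inv_cancel₀ hb.ne']
  have hnonneg : ∀ t ∈ Set.Ioc 0 b⁻¹, 0 ≤ (1 - b * t) * t ^ (p - 1) := fun t ht =>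
    mul_nonneg (hbt t ht) (Real.rpow_nonneg ht.1.le _)
  rw [lintegral_rpow_eq_lintegral_meas_le_mul unifInterval (ae_of_all _ fun _ => infDist_nonneg)
    (continuous_infDist_pt _).measurable.aemeasurable hp]
  calc ENNReal.ofReal (b⁻¹ ^ p / (p + 1))
      = ENNReal.ofReal p * ENNReal.ofReal (∫ t in (0 : ℝ)..b⁻¹, (1 - b * t) * t ^ (p - 1)) := by
        rw [integral_one_sub_mul_mul_rpow hb hp, ← ENNReal.ofReal_mul hp.le]
        congr 1
        field_simp
    _ = ENNReal.ofReal p *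
          ∫⁻ t in Set.Ioc 0 b⁻¹, ENNReal.ofReal (1 - b * t) * ENNReal.ofReal (t ^ (p - 1)) := by
        rw [intervalIntegral.integral_of_le (by positivity),
          ofReal_integral_eq_lintegral_ofReal hint.1
            ((ae_restrict_iff' measurableSet_Ioc).2 (ae_of_all _ hnonneg))]
        congr 1
        exact setLIntegral_congr_fun measurableSet_Ioc fun t ht => ENNReal.ofReal_mul (hbt t ht)
    _ ≤ ENNReal.ofReal p *
          ∫⁻ t in Set.Ioc 0 b⁻¹,
            unifInterval {x | t ≤ infDist x S} * ENNReal.ofReal (t ^ (p - 1)) := by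
        gcongr _ * ?_
        refine setLIntegral_mono' measurableSet_Ioc fun t ht => ?_
        gcongr
        exact ofReal_one_sub_le_unifInterval_le_infDist hS ht.1.le
    _ ≤ ENNReal.ofReal p *
          ∫⁻ t in Set.Ioi 0,
            unifInterval {x | t ≤ infDist x S} * ENNReal.ofReal (t ^ (p - 1)) := by
        gcongr
        exact Set.Ioc_subset_Ioi_self

lemma integral_abs_rpow {p : ℝ} (hp : 0 ≤ p) {a : ℝ} (ha : 0 ≤ a) :
    ∫ x in -a..a, |x| ^ p = 2 * (a ^ (p + 1) / (p + 1)) := by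
  have habs : ∀ x ∈ Set.uIcc 0 a, |x| ^ p = x ^ p := fun x hx => by
    rw [abs_of_nonneg (Set.uIcc_of_le ha ▸ hx).1]
  have hright : ∫ x in (0 : ℝ)..a, |x| ^ p = a ^ (p + 1) / (p + 1) := by
    rw [intervalIntegral.integral_congr habs, integral_rpow (Or.inl (by linarith)),
      Real.zero_rpow (by linarith), sub_zero]
  have hleft : ∫ x in -a..0, |x| ^ p = a ^ (p + 1) / (p + 1) := by
    simpa [hright] using
      (intervalIntegral.integral_comp_neg (a := 0) (b := a) fun x => |x| ^ p).symm
  have hint : ∀ u v : ℝ, IntervalIntegrable (fun x => |x| ^ p) volume u v := fun u v =>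
    ((Real.continuous_rpow_const hp).comp continuous_abs).intervalIntegrable u v
  rw [← intervalIntegral.integral_add_adjacent_intervals (hint _ 0) (hint 0 _), hleft, hright]
  ring

lemma intervalIntegrable_abs_fract_sub_half_rpow {p : ℝ} (hp : 0 ≤ p) (a b : ℝ) :
    IntervalIntegrable (fun y => |Int.fract y - 1 / 2| ^ p) volume a b := by
  have hmeas : Measurable fun y : ℝ => |Int.fract y - 1 / 2| ^ p := by fun_prop
  refine (intervalIntegrable_const (c := (1 : ℝ))).mono_fun' hmeas.aestronglyMeasurable
    (ae_of_all _ fun y => ?_)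
  have := Int.fract_nonneg y
  have := Int.fract_lt_one y
  dsimp only
  rw [Real.norm_of_nonneg (by positivity)]
  exact Real.rpow_le_one (abs_nonneg _) (abs_le.2 ⟨by linarith, by linarith⟩) hp

lemma integral_abs_fract_sub_half_rpow {p : ℝ} (hp : 0 < p) :
    ∫ y in (0 : ℝ)..1, |Int.fract y - 1 / 2| ^ p = 2⁻¹ ^ p / (p + 1) := by
  have hfract : ∀ y ∈ Set.uIcc (0 : ℝ) 1, |Int.fract y - 1 / 2| ^ p = |y - 1 / 2| ^ p := by
    intro y hy
    rw [Set.uIcc_of_le zero_le_one] at hy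
    rcases hy.2.lt_or_eq with hy1 | rfl
    · rw [Int.fract_eq_self.2 ⟨hy.1, hy1⟩]
    · norm_num
  rw [intervalIntegral.integral_congr hfract,
    intervalIntegral.integral_comp_sub_right (fun x => |x| ^ p),
    show (0 : ℝ) - 1 / 2 = -2⁻¹ by norm_num, show (1 : ℝ) - 1 / 2 = 2⁻¹ by norm_num,
    integral_abs_rpow hp.le (by norm_num), Real.rpow_add_one (by norm_num)]
  ring

def cellMidpoint (N : ℕ) (x : ℝ) : ℝ := (⌊(N : ℝ) * x⌋ + 1 / 2) / N

lemma measurable_cellMidpoint (N : ℕ) : Measurable (cellMidpoint N) := by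
  unfold cellMidpoint
  fun_prop

lemma cellMidpoint_mem {N : ℕ} (hN : N ≠ 0) {x : ℝ} (hx : x ∈ Set.Ico (0 : ℝ) 1) :
    cellMidpoint N x ∈ (Finset.range N).image fun i : ℕ => (i + 1 / 2 : ℝ) / N := by
  have hNpos : (0 : ℝ) < N := by positivity
  obtain ⟨k, hk⟩ := Int.eq_ofNat_of_zero_le (Int.floor_nonneg.2 (mul_nonneg hNpos.le hx.1))
  refine Finset.mem_image.2 ⟨k, Finset.mem_range.2 ?_, by rw [cellMidpoint, hk]; push_cast; rfl⟩
  have hlt : ⌊(N : ℝ) * x⌋ < N := Int.floor_lt.2 (by push_cast; nlinarith [hx.2])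
  omega

lemma sub_cellMidpoint {N : ℕ} (hN : N ≠ 0) (x : ℝ) :
    x - cellMidpoint N x = (Int.fract (N * x) - 1 / 2) / N := by
  rw [cellMidpoint, Int.fract]
  field_simp
  ring

lemma abs_sub_cellMidpoint_rpow {N : ℕ} (hN : N ≠ 0) (p x : ℝ) :
    |x - cellMidpoint N x| ^ p = (N : ℝ)⁻¹ ^ p * |Int.fract (N * x) - 1 / 2| ^ p := by
  have hNpos : (0 : ℝ) < N := by positivity
  rw [sub_cellMidpoint hN, abs_div, Nat.abs_cast, Real.div_rpow (abs_nonneg _) hNpos.le,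
    Real.inv_rpow hNpos.le]
  ring

lemma intervalIntegrable_abs_sub_cellMidpoint_rpow {N : ℕ} (hN : N ≠ 0) {p : ℝ} (hp : 0 ≤ p) :
    IntervalIntegrable (fun x => |x - cellMidpoint N x| ^ p) volume 0 1 := by
  have hNpos : (0 : ℝ) < N := by positivity
  simp only [abs_sub_cellMidpoint_rpow hN]
  simpa [hNpos.ne'] using
    ((intervalIntegrable_abs_fract_sub_half_rpow hp 0 N).comp_mul_left (c := N)).const_mul
      ((N : ℝ)⁻¹ ^ p)

lemma integral_abs_sub_cellMidpoint_rpow {p : ℝ} (hp : 0 < p) {N : ℕ} (hN : N ≠ 0) :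
    ∫ x in (0 : ℝ)..1, |x - cellMidpoint N x| ^ p = (2 * N : ℝ)⁻¹ ^ p / (p + 1) := by
  have hNpos : (0 : ℝ) < N := by positivity
  have hperiodic : Function.Periodic (fun y : ℝ => |Int.fract y - 1 / 2| ^ p) 1 := fun y => by
    simp only [Int.fract_add_one]
  have hperiods := hperiodic.intervalIntegral_add_zsmul_eq N 0
    (intervalIntegrable_abs_fract_sub_half_rpow hp.le)
  simp only [zero_add, zsmul_eq_mul, mul_one, Int.cast_natCast] at hperiods
  simp only [abs_sub_cellMidpoint_rpow hN]
  rw [intervalIntegral.integral_const_mul,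
    intervalIntegral.integral_comp_mul_left (fun y => |Int.fract y - 1 / 2| ^ p) hNpos.ne',
    mul_zero, mul_one, hperiods, integral_abs_fract_sub_half_rpow hp, mul_inv,
    Real.mul_rpow (by norm_num) (by positivity), smul_eq_mul]
  field_simp

lemma lintegral_edist_cellMidpoint_rpow {p : ℝ} (hp : 0 < p) {N : ℕ} (hN : N ≠ 0) :
    ∫⁻ x, edist x (cellMidpoint N x) ^ p ∂unifInterval =
      ENNReal.ofReal ((2 * N : ℝ)⁻¹ ^ p / (p + 1)) := by
  calc ∫⁻ x, edist x (cellMidpoint N x) ^ p ∂unifInterval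
      = ∫⁻ x in Set.Ioc 0 1, ENNReal.ofReal (|x - cellMidpoint N x| ^ p) := by
        rw [unifInterval, ← Measure.restrict_congr_set Ioc_ae_eq_Icc]
        congr with x
        rw [edist_dist, Real.dist_eq, ENNReal.ofReal_rpow_of_nonneg (abs_nonneg _) hp.le]
    _ = ENNReal.ofReal (∫ x in (0 : ℝ)..1, |x - cellMidpoint N x| ^ p) := by
        rw [intervalIntegral.integral_of_le zero_le_one, ofReal_integral_eq_lintegral_ofReal
          (intervalIntegrable_abs_sub_cellMidpoint_rpow hN hp.le).1
          (ae_of_all _ fun _ => by positivity)]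
    _ = _ := by rw [integral_abs_sub_cellMidpoint_rpow hp hN]

lemma WpDelta_unifInterval_le {p : ℝ} (hp : 0 < p) {N : ℕ} (hN : N ≠ 0) :
    WpDelta p unifInterval N ≤ ENNReal.ofReal ((2 * N : ℝ)⁻¹ ^ p / (p + 1)) ^ (1 / p) := by
  -- `cellMidpoint N 1` is not among the `N` midpoints, but `{1}` is null.
  have hIco : ∀ᵐ x ∂unifInterval, x ∈ Set.Ico (0 : ℝ) 1 := by
    rw [unifInterval, ← Measure.restrict_congr_set Ico_ae_eq_Icc]
    exact ae_restrict_mem measurableSet_Ico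
  rw [← lintegral_edist_cellMidpoint_rpow hp hN]
  exact WpDelta_le_of_ae_mem hp.le (measurable_cellMidpoint N)
    (Finset.card_image_le.trans (Finset.card_range N).le)
    (hIco.mono fun x hx => cellMidpoint_mem hN hx)

theorem WpDelta_unifInterval {p : ℝ} (hp : 0 < p) {N : ℕ} (hN : N ≠ 0) :
    WpDelta p unifInterval N = ENNReal.ofReal ((2 * N : ℝ)⁻¹ ^ p / (p + 1)) ^ (1 / p) := by
  refine le_antisymm (WpDelta_unifInterval_le hp hN)
    (le_WpDelta hp.le (IsProbabilityMeasure.ne_zero _) fun S hS hSN => ?_)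
  refine le_trans ?_ (le_lintegral_infDist_rpow_unifInterval hp hS)
  have := hS.card_pos
  gcongr

theorem theta_one_dim (p : ℝ) (hp : 1 ≤ p) :
    Tendsto (fun N : ℕ => (N : ℝ) * (WpDelta p unifInterval N).toReal)
      atTop (nhds ((p + 1) ^ (-(1 / p)) / 2)) := by
  have hp0 : 0 < p := by linarith
  refine tendsto_const_nhds.congr' ?_
  filter_upwards [eventually_ne_atTop 0] with N hN
  have hNpos : (0 : ℝ) < N := by positivity
  rw [eq_comm, WpDelta_unifInterval hp0 hN,
    ENNReal.ofReal_rpow_of_nonneg (by positivity) (by positivity),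
    ENNReal.toReal_ofReal (by positivity), Real.div_rpow (by positivity) (by positivity),
    ← Real.rpow_mul (by positivity), mul_one_div_cancel hp0.ne', Real.rpow_one,
    Real.rpow_neg (by positivity)]
  field_simp
end
end
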